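/- arXiv:2509.14878 — 8 statements merged into one kernel-verified Lean document; each statement's English description precedes it below -/
import Mathlib

section
/- Let q be an odd prime power, n, k, ℓ integers with 2 ≤ k ≤ n - ℓ - 1 and 0 ≤ ℓ ≤ n-k-1, α_1,…,α_n distinct elements of F_q, v_1,…,v_n ∈ F_q*, and η = (η_0,…,η_ℓ) ∈ F_q^{ℓ+1} nonzero. Let u_i = ∏_{j≠i}(α_i-α_j)^{-1}, P = ∏_j α_j = α_i P_i, and Ω_r = ∑_{t=0}^{ℓ} η_t S_{t+1-r}(α_1,…,α_n) for 1 ≤ r ≤ ℓ+1. Let G be the k×n matrix whose first row has entries v_j(1 + ∑_{t=0}^{ℓ} η_t α_j^{k+t}) and whose (i+1)-th row (1 ≤ i ≤ k-1) has entries v_j α_j^i. Let H be the (n-k)×n matrix whose row indexed by r ∈ {0,…,n-k-ℓ-2} has entries (u_j/v_j) α_j^r, and whose row indexed by r ∈ {n-k-ℓ-1,…,n-k-1} has entries (u_j/v_j)(α_j^r - (-1)^{n-1} P_j Ω_{n-k-r}). Then G H^T = 0. -/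
open Finset Polynomial Matrix

noncomputable def hsymm {F : Type*} [CommSemiring F] (n t : ℕ) (α : Fin n → F) : F :=
  ∑ d ∈ Finset.Nat.antidiagonalTuple n t, ∏ i, α i ^ d i

noncomputable def hsymmZ {F : Type*} [CommSemiring F] (n : ℕ) (t : ℤ) (α : Fin n → F) : F :=
  if 0 ≤ t then hsymm n t.toNat α else 0

section Aux
variable {F : Type*} [Field F]




noncomputable def uu {n : ℕ} (α : Fin n → F) (j : Fin n) : F :=
  ∏ i ∈ Finset.univ.erase j, (α j - α i)⁻¹

lemma leadingCoeff_basis {n : ℕ} (α : Fin n → F) (hinj : Function.Injective α) (j : Fin n) :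
    (Lagrange.basis Finset.univ α j).coeff (n - 1) = uu α j := by
  have hj : j ∈ (univ : Finset (Fin n)) := mem_univ j
  have hd : (Lagrange.basis Finset.univ α j).natDegree = n - 1 := by
    rw [Lagrange.natDegree_basis hinj.injOn hj, card_univ, Fintype.card_fin]
  rw [← hd, Polynomial.coeff_natDegree]
  unfold Lagrange.basis
  rw [Polynomial.leadingCoeff_prod]
  refine Finset.prod_congr rfl fun i hi => ?_
  have hne : α j - α i ≠ 0 := sub_ne_zero.2 fun h => (mem_erase.mp hi).1.symm (hinj h)
  rw [Lagrange.basisDivisor, leadingCoeff_mul, leadingCoeff_C,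
    leadingCoeff_X_sub_C, mul_one]

lemma lag_coeff {n : ℕ} (α : Fin n → F) (hinj : Function.Injective α) (m : ℕ) (hm : m < n) :
    ∑ j, uu α j * α j ^ m = if m = n - 1 then 1 else 0 := by
  have hdeg : (X ^ m : F[X]).degree < (#(univ : Finset (Fin n)) : ℕ) := by
    rw [card_univ, Fintype.card_fin, degree_X_pow]
    exact_mod_cast hm
  have h := Lagrange.eq_interpolate (f := (X ^ m : F[X])) hinj.injOn hdeg
  have h2 := congrArg (fun p => Polynomial.coeff p (n - 1)) h
  simp only [Lagrange.interpolate_apply, Polynomial.finset_sum_coeff, Polynomial.coeff_C_mul,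
    Polynomial.eval_pow, Polynomial.eval_X, Polynomial.coeff_X_pow] at h2
  have h4 : ∑ j, uu α j * α j ^ m
      = ∑ j, α j ^ m * (Lagrange.basis Finset.univ α j).coeff (n - 1) :=
    Finset.sum_congr rfl fun j _ => by rw [leadingCoeff_basis α hinj j]; ring
  rw [h4, ← h2]
  simp [eq_comm]

lemma lag_eval0 {n : ℕ} (α : Fin n → F) (hinj : Function.Injective α) (m : ℕ) (hm : m < n) :
    ∑ j, uu α j * (∏ i ∈ Finset.univ.erase j, α i) * α j ^ m
      = (-1 : F) ^ (n - 1) * (if m = 0 then 1 else 0) := by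
  have hdeg : (X ^ m : F[X]).degree < (#(univ : Finset (Fin n)) : ℕ) := by
    rw [card_univ, Fintype.card_fin, degree_X_pow]
    exact_mod_cast hm
  have h := Lagrange.eq_interpolate (f := (X ^ m : F[X])) hinj.injOn hdeg
  have h2 := congrArg (fun p => Polynomial.eval (0 : F) p) h
  have hb : ∀ j : Fin n, Polynomial.eval (0 : F) (Lagrange.basis Finset.univ α j)
      = (-1 : F) ^ (n - 1) * (uu α j * ∏ i ∈ Finset.univ.erase j, α i) := by
    intro j
    unfold Lagrange.basis Lagrange.basisDivisor
    rw [Polynomial.eval_prod]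
    have : ∀ i ∈ Finset.univ.erase j,
        Polynomial.eval (0:F) (C (α j - α i)⁻¹ * (X - C (α i)))
          = (-1) * ((α j - α i)⁻¹ * α i) := by
      intro i _; simp only [Polynomial.eval_mul, Polynomial.eval_C, Polynomial.eval_sub,
        Polynomial.eval_X]; ring
    rw [Finset.prod_congr rfl this, Finset.prod_mul_distrib, Finset.prod_const,
      Finset.card_erase_of_mem (mem_univ j), card_univ, Fintype.card_fin,
      Finset.prod_mul_distrib]
    unfold uu; ring
  simp only [Lagrange.interpolate_apply, Polynomial.eval_finset_sum, Polynomial.eval_mul,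
    Polynomial.eval_C, Polynomial.eval_pow, Polynomial.eval_X] at h2
  rw [Finset.sum_congr rfl (fun (j : Fin n) (_ : j ∈ univ) => by rw [hb j])] at h2
  have h3 : (0:F) ^ m = (-1:F)^(n-1) * ∑ j, uu α j * (∏ i ∈ Finset.univ.erase j, α i) * α j ^ m := by
    rw [h2, Finset.mul_sum]; exact Finset.sum_congr rfl fun j _ => by ring
  have hc : ((-1:F)^(n-1)) * ((-1:F)^(n-1)) = 1 := by
    rw [← pow_add]; exact Even.neg_one_pow ⟨n-1, by ring⟩
  have := congrArg (fun x => (-1:F)^(n-1) * x) h3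
  simp only [← mul_assoc, hc, one_mul] at this
  rw [← this, zero_pow_eq]




lemma hsymm_zero (n : ℕ) (α : Fin n → F) : hsymm n 0 α = 1 := by
  simp [hsymm, Finset.Nat.antidiagonalTuple_zero_right]

lemma hsymm_one_var (t : ℕ) (α : Fin 1 → F) : hsymm 1 t α = α 0 ^ t := by
  simp [hsymm, Finset.Nat.antidiagonalTuple_one]

lemma hsymm_split (n t : ℕ) (α : Fin (n + 1) → F) :
    hsymm (n + 1) t α = ∑ ab ∈ Finset.HasAntidiagonal.antidiagonal t,
      α 0 ^ ab.1 * hsymm n ab.2 (α ∘ Fin.succ) := by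
  unfold hsymm
  rw [Finset.sum_congr rfl (fun (ab : ℕ × ℕ) (_ : ab ∈ Finset.HasAntidiagonal.antidiagonal t) =>
    Finset.mul_sum (Finset.Nat.antidiagonalTuple n ab.2)
      (fun d => ∏ i, (α ∘ Fin.succ) i ^ d i) (α 0 ^ ab.1)), Finset.sum_sigma']
  rw [eq_comm]
  refine Finset.sum_nbij' (fun x => Fin.cons x.1.1 x.2)
    (fun d => ⟨(d 0, ∑ i, d (Fin.succ i)), fun i => d (Fin.succ i)⟩) ?_ ?_ ?_ ?_ ?_
  · rintro ⟨⟨a, b⟩, d⟩ hx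
    simp only [Finset.mem_sigma, Finset.HasAntidiagonal.mem_antidiagonal,
      Finset.Nat.mem_antidiagonalTuple] at hx ⊢
    rw [Fin.sum_univ_succ]
    simp only [Fin.cons_zero, Fin.cons_succ]
    rw [hx.2]
    exact hx.1
  · intro d hd
    simp only [Finset.Nat.mem_antidiagonalTuple] at hd
    simp only [Finset.mem_sigma, Finset.HasAntidiagonal.mem_antidiagonal,
      Finset.Nat.mem_antidiagonalTuple]
    refine ⟨?_, trivial⟩
    rw [← hd, Fin.sum_univ_succ]
  · rintro ⟨⟨a, b⟩, d⟩ hx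
    simp only [Finset.mem_sigma, Finset.HasAntidiagonal.mem_antidiagonal,
      Finset.Nat.mem_antidiagonalTuple] at hx
    simp only [Fin.cons_zero, Fin.cons_succ]
    congr 1
    exact Prod.ext rfl hx.2
  · intro d hd
    exact funext fun i => by cases i using Fin.cases <;> simp
  · rintro ⟨⟨a, b⟩, d⟩ hx
    rw [Fin.prod_univ_succ]
    simp [Function.comp]

lemma hsymm_rec (n t : ℕ) (α : Fin (n + 1) → F) :
    hsymm (n + 1) (t + 1) α
      = hsymm n (t + 1) (α ∘ Fin.succ) + α 0 * hsymm (n + 1) t α := by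
  rw [hsymm_split n (t+1) α, hsymm_split n t α, Finset.Nat.antidiagonal_succ,
    Finset.sum_cons, Finset.sum_map, Finset.mul_sum]
  simp only [Function.Embedding.coe_prodMap, Function.Embedding.coeFn_mk,
    Function.Embedding.refl_apply, Prod.map_fst, Prod.map_snd, pow_zero, one_mul]
  congr 1
  exact Finset.sum_congr rfl fun ab _ => by rw [pow_succ]; ring




lemma erase_succ_eq (n : ℕ) (j : Fin (n + 1)) :
    (Finset.univ.erase (Fin.succ j) : Finset (Fin (n + 2)))
      = insert 0 ((Finset.univ.erase j).image Fin.succ) := by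
  ext i
  cases i using Fin.cases with
  | zero => simp [(Fin.succ_ne_zero j).symm]
  | succ i' =>
    simp [Fin.succ_inj, (Fin.succ_ne_zero i').symm, Fin.succ_ne_zero]

lemma uu_succ {n : ℕ} (α : Fin (n + 2) → F) (hinj : Function.Injective α) (j : Fin (n + 1)) :
    uu α (Fin.succ j) * (α (Fin.succ j) - α 0) = uu (α ∘ Fin.succ) j := by
  unfold uu
  rw [erase_succ_eq, Finset.prod_insert (by simp [Fin.succ_ne_zero]),
    Finset.prod_image (fun a _ b _ h => Fin.succ_injective _ h)]
  have h0 : α (Fin.succ j) - α 0 ≠ 0 :=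
    sub_ne_zero.2 fun h => Fin.succ_ne_zero j (hinj h)
  rw [mul_comm ((α (Fin.succ j) - α 0)⁻¹) _, mul_assoc, inv_mul_cancel₀ h0, mul_one]
  rfl


lemma master (s n : ℕ) (α : Fin (n + 1) → F) (hinj : Function.Injective α) :
    ∑ j, uu α j * α j ^ (n + s) = hsymm (n + 1) s α := by
  induction s generalizing n α with
  | zero =>
    rw [hsymm_zero]
    have h := lag_coeff α hinj n (by omega)
    simpa using h
  | succ s ihs =>
    induction n with
    | zero =>
      rw [hsymm_one_var, Fin.sum_univ_one]
      have h1 : uu α 0 = 1 := by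
        unfold uu
        rw [show (Finset.univ.erase (0 : Fin 1)) = ∅ by decide]
        simp
      rw [h1, one_mul, zero_add]
    | succ n ihn =>
      have key : ∀ j : Fin (n + 2), uu α j * α j ^ (n + 1 + (s + 1))
          = uu α j * (α j - α 0) * α j ^ (n + 1 + s) + α 0 * (uu α j * α j ^ (n + 1 + s)) := by
        intro j
        rw [show n + 1 + (s + 1) = (n + 1 + s) + 1 by ring, pow_succ]
        ring
      rw [Finset.sum_congr rfl (fun j _ => key j), Finset.sum_add_distrib, ← Finset.mul_sum,
        Fin.sum_univ_succ]
      have h0 : uu α 0 * (α 0 - α 0) * α 0 ^ (n + 1 + s) = 0 := by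
        rw [sub_self]; ring
      have h1 : ∀ j : Fin (n + 1),
          uu α (Fin.succ j) * (α (Fin.succ j) - α 0) * α (Fin.succ j) ^ (n + 1 + s)
            = uu (α ∘ Fin.succ) j * ((α ∘ Fin.succ) j) ^ (n + (s + 1)) := by
        intro j
        have huu := uu_succ α hinj j
        simp only [Function.comp_apply]
        rw [show n + (s + 1) = n + 1 + s by ring, ← huu]
      rw [h0, zero_add, Finset.sum_congr rfl (fun j _ => h1 j),
        ihn (α ∘ Fin.succ) (hinj.comp (Fin.succ_injective _))]
      have h2 := ihs (n + 1) α hinj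
      rw [h2, hsymm_rec (n + 1) s α]

lemma masterZ (n : ℕ) (hn : 1 ≤ n) (α : Fin n → F) (hinj : Function.Injective α) (m : ℕ) :
    ∑ j, uu α j * α j ^ m = hsymmZ n ((m : ℤ) - n + 1) α := by
  obtain ⟨n', rfl⟩ : ∃ n', n = n' + 1 := ⟨n - 1, by omega⟩
  by_cases h : n' ≤ m
  · obtain ⟨s, rfl⟩ : ∃ s, m = n' + s := ⟨m - n', by omega⟩
    rw [master s n' α hinj]
    unfold hsymmZ
    rw [if_pos (by push_cast; omega)]
    have harg : (((n' + s : ℕ) : ℤ) - ((n' + 1 : ℕ) : ℤ) + 1).toNat = s := by omega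
    rw [harg]
  · rw [lag_coeff α hinj m (by omega), if_neg (by omega)]
    unfold hsymmZ
    rw [if_neg (by push_cast; omega)]

lemma cancel (b a x y : F) (hb : b ≠ 0) : (b * x) * (a / b * y) = a * (x * y) := by
  field_simp

end Aux

theorem stmt6 {F : Type*} [Field F] [Fintype F] (hodd : Odd (Fintype.card F))
    (n k ℓ : ℕ) (hk2 : 2 ≤ k) (hk : k ≤ n - ℓ - 1) (hℓ : ℓ ≤ n - k - 1)
    (α : Fin n → F) (hinj : Function.Injective α) (hα0 : ∀ i, α i ≠ 0)
    (v : Fin n → F) (hv : ∀ i, v i ≠ 0)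
    (η : ℕ → F) (hη : ∃ t ≤ ℓ, η t ≠ 0)
    (u P_ : Fin n → F)
    (hu : u = fun i => ∏ j ∈ Finset.univ.erase i, (α i - α j)⁻¹)
    (hP : P_ = fun i => ∏ j ∈ Finset.univ.erase i, α j)
    (Ω : ℕ → F)
    (hΩ : Ω = fun (r : ℕ) => ∑ t ∈ Finset.range (ℓ + 1),
      η t * hsymmZ n ((t : ℤ) + 1 - (r : ℤ)) α)
    (G : Matrix (Fin k) (Fin n) F)
    (hG : G = Matrix.of fun (i : Fin k) (j : Fin n) =>
      if (i : ℕ) = 0 then v j * (1 + ∑ t ∈ Finset.range (ℓ + 1), η t * α j ^ (k + t))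
      else v j * α j ^ (i : ℕ))
    (H : Matrix (Fin (n - k)) (Fin n) F)
    (hH : H = Matrix.of fun (r : Fin (n - k)) (j : Fin n) =>
      if (r : ℕ) < n - k - ℓ - 1 then u j / v j * α j ^ (r : ℕ)
      else u j / v j * (α j ^ (r : ℕ) - (-1 : F) ^ (n - 1) * P_ j * Ω (n - k - (r : ℕ)))) :
    G * H.transpose = 0 := by
  have hu' : u = uu α := hu
  have hn : k + ℓ + 1 ≤ n := by omega
  have hPj : ∀ j, P_ j = ∏ i' ∈ Finset.univ.erase j, α i' := fun j => by rw [hP]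
  set c : F := (-1 : F) ^ (n - 1) with hc
  have hcc : c * c = 1 := by
    rw [hc, ← pow_add]
    exact Even.neg_one_pow ⟨n - 1, by ring⟩
  have hS0 : ∀ m : ℕ, m < n - 1 → ∑ j, uu α j * α j ^ m = 0 := by
    intro m hm
    rw [lag_coeff α hinj m (by omega), if_neg (by omega)]
  have hSZ : ∀ m : ℕ, ∑ j, uu α j * α j ^ m = hsymmZ n ((m : ℤ) - n + 1) α :=
    fun m => masterZ n (by omega) α hinj m
  have hP0 : ∀ m : ℕ, 1 ≤ m → m < n → ∑ j, uu α j * P_ j * α j ^ m = 0 := by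
    intro m h1 h2
    have := lag_eval0 α hinj m h2
    rw [Finset.sum_congr rfl (fun j (_ : j ∈ univ) => by rw [hPj j])]
    rw [this, if_neg (by omega), mul_zero]
  have hPc : ∑ j, uu α j * P_ j = c := by
    have h := lag_eval0 α hinj 0 (by omega)
    norm_num at h
    rw [Finset.sum_congr rfl (fun j (_ : j ∈ univ) => by rw [hPj j]), h, hc]
  subst hG hH
  ext i r
  rw [Matrix.mul_apply]
  simp only [Matrix.transpose_apply, Matrix.of_apply, Matrix.zero_apply, hu']
  have hik : (i : ℕ) < k := i.isLt
  have hrnk : (r : ℕ) < n - k := r.isLt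
  by_cases hi : (i : ℕ) = 0 <;> by_cases hr : (r : ℕ) < n - k - ℓ - 1
  · -- i = 0, r small
    simp only [if_pos hi, if_pos hr]
    have step : ∀ j, (v j * (1 + ∑ t ∈ Finset.range (ℓ + 1), η t * α j ^ (k + t)))
        * (uu α j / v j * α j ^ (r : ℕ))
        = uu α j * α j ^ (r : ℕ)
          + ∑ t ∈ Finset.range (ℓ + 1), η t * (uu α j * α j ^ (k + t + (r : ℕ))) := by
      intro j
      rw [cancel _ _ _ _ (hv j)]
      have h1 : ∑ t ∈ Finset.range (ℓ + 1), η t * (uu α j * α j ^ (k + t + (r : ℕ)))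
          = (uu α j * α j ^ (r : ℕ)) * ∑ t ∈ Finset.range (ℓ + 1), η t * α j ^ (k + t) := by
        rw [Finset.mul_sum]
        exact Finset.sum_congr rfl fun t _ => by rw [pow_add]; ring
      rw [h1]; ring
    rw [Finset.sum_congr rfl (fun j (_ : j ∈ univ) => step j), Finset.sum_add_distrib,
      hS0 (r : ℕ) (by omega), Finset.sum_comm]
    rw [Finset.sum_congr rfl (fun t (ht : t ∈ Finset.range (ℓ + 1)) => by
      rw [← Finset.mul_sum, hS0 (k + t + (r : ℕ))
        (by have := Finset.mem_range.mp ht; omega), mul_zero])]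
    simp
  · -- i = 0, r large
    simp only [if_pos hi, if_neg hr]
    have step : ∀ j, (v j * (1 + ∑ t ∈ Finset.range (ℓ + 1), η t * α j ^ (k + t)))
        * (uu α j / v j * (α j ^ (r : ℕ) - c * P_ j * Ω (n - k - (r : ℕ))))
        = (uu α j * α j ^ (r : ℕ) - (c * Ω (n - k - (r : ℕ))) * (uu α j * P_ j))
          + ((∑ t ∈ Finset.range (ℓ + 1), η t * (uu α j * α j ^ (k + t + (r : ℕ))))
            - (c * Ω (n - k - (r : ℕ)))
              * ∑ t ∈ Finset.range (ℓ + 1), η t * (uu α j * P_ j * α j ^ (k + t))) := by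
      intro j
      rw [cancel _ _ _ _ (hv j)]
      have h1 : ∑ t ∈ Finset.range (ℓ + 1), η t * (uu α j * α j ^ (k + t + (r : ℕ)))
          = (uu α j * α j ^ (r : ℕ)) * ∑ t ∈ Finset.range (ℓ + 1), η t * α j ^ (k + t) := by
        rw [Finset.mul_sum]
        exact Finset.sum_congr rfl fun t _ => by rw [pow_add]; ring
      have h2 : ∑ t ∈ Finset.range (ℓ + 1), η t * (uu α j * P_ j * α j ^ (k + t))
          = (uu α j * P_ j) * ∑ t ∈ Finset.range (ℓ + 1), η t * α j ^ (k + t) := by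
        rw [Finset.mul_sum]
        exact Finset.sum_congr rfl fun t _ => by ring
      rw [h1, h2]; ring
    have hB : ∑ j, ∑ t ∈ Finset.range (ℓ + 1), η t * (uu α j * α j ^ (k + t + (r : ℕ)))
        = Ω (n - k - (r : ℕ)) := by
      rw [Finset.sum_comm, hΩ]
      refine Finset.sum_congr rfl fun t _ => ?_
      rw [← Finset.mul_sum, hSZ (k + t + (r : ℕ))]
      congr 1
      have harg : ((k + t + (r : ℕ) : ℕ) : ℤ) - (n : ℤ) + 1
          = (t : ℤ) + 1 - ((n - k - (r : ℕ) : ℕ) : ℤ) := by omega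
      rw [harg]
    have hD : ∑ j, ∑ t ∈ Finset.range (ℓ + 1), η t * (uu α j * P_ j * α j ^ (k + t)) = 0 := by
      rw [Finset.sum_comm]
      refine Finset.sum_eq_zero fun t ht => ?_
      rw [← Finset.mul_sum, hP0 (k + t) (by omega)
        (by have := Finset.mem_range.mp ht; omega), mul_zero]
    rw [Finset.sum_congr rfl (fun j (_ : j ∈ univ) => step j), Finset.sum_add_distrib,
      Finset.sum_sub_distrib, Finset.sum_sub_distrib, ← Finset.mul_sum, ← Finset.mul_sum,
      hS0 (r : ℕ) (by omega), hPc, hB, hD, mul_zero, zero_sub, sub_zero]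
    have : c * Ω (n - k - (r : ℕ)) * c = Ω (n - k - (r : ℕ)) := by
      rw [mul_right_comm, hcc, one_mul]
    rw [this]
    ring
  · -- i ≠ 0, r small
    simp only [if_neg hi, if_pos hr]
    have step : ∀ j, (v j * α j ^ (i : ℕ)) * (uu α j / v j * α j ^ (r : ℕ))
        = uu α j * α j ^ ((i : ℕ) + (r : ℕ)) := by
      intro j
      rw [cancel _ _ _ _ (hv j), pow_add]
    rw [Finset.sum_congr rfl (fun j (_ : j ∈ univ) => step j),
      hS0 ((i : ℕ) + (r : ℕ)) (by omega)]
  · -- i ≠ 0, r large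
    simp only [if_neg hi, if_neg hr]
    have step : ∀ j, (v j * α j ^ (i : ℕ))
        * (uu α j / v j * (α j ^ (r : ℕ) - c * P_ j * Ω (n - k - (r : ℕ))))
        = uu α j * α j ^ ((i : ℕ) + (r : ℕ))
          - (c * Ω (n - k - (r : ℕ))) * (uu α j * P_ j * α j ^ (i : ℕ)) := by
      intro j
      rw [cancel _ _ _ _ (hv j), pow_add]
      ring
    rw [Finset.sum_congr rfl (fun j (_ : j ∈ univ) => step j), Finset.sum_sub_distrib,
      ← Finset.mul_sum, hS0 ((i : ℕ) + (r : ℕ)) (by omega),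
      hP0 (i : ℕ) (by omega) (by omega), mul_zero, sub_zero]
end

section
/- With the notation of the parity-check matrix H above (rows (u_j/v_j)α_j^r for 0 ≤ r ≤ n-k-ℓ-2 and (u_j/v_j)(α_j^r - (-1)^{n-1}P_j Ω_{n-k-r}) for n-k-ℓ-1 ≤ r ≤ n-k-1, with α_j distinct and nonzero, v_j nonzero), the matrix H has rank n-k over F_q. -/
open Finset Polynomial Matrix

theorem stmt7 {F : Type*} [Field F] [Fintype F] (hodd : Odd (Fintype.card F))
    (n k ℓ : ℕ) (hk2 : 2 ≤ k) (hk : k ≤ n - ℓ - 1) (hℓ : ℓ ≤ n - k - 1)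
    (α : Fin n → F) (hinj : Function.Injective α) (hα0 : ∀ i, α i ≠ 0)
    (v : Fin n → F) (hv : ∀ i, v i ≠ 0)
    (η : ℕ → F) (hη : ∃ t ≤ ℓ, η t ≠ 0)
    (u P_ : Fin n → F)
    (hu : u = fun i => ∏ j ∈ Finset.univ.erase i, (α i - α j)⁻¹)
    (hP : P_ = fun i => ∏ j ∈ Finset.univ.erase i, α j)
    (Ω : ℕ → F)
    (hΩ : Ω = fun (r : ℕ) => ∑ t ∈ Finset.range (ℓ + 1),
      η t * hsymmZ n ((t : ℤ) + 1 - (r : ℤ)) α)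
    (H : Matrix (Fin (n - k)) (Fin n) F)
    (hH : H = Matrix.of fun (r : Fin (n - k)) (j : Fin n) =>
      if (r : ℕ) < n - k - ℓ - 1 then u j / v j * α j ^ (r : ℕ)
      else u j / v j * (α j ^ (r : ℕ) - (-1 : F) ^ (n - 1) * P_ j * Ω (n - k - (r : ℕ)))) :
    H.rank = n - k := by
  classical
  have hnk : n - k < n := by omega
  have hu0 : ∀ j, u j ≠ 0 := by
    intro j
    rw [hu]
    refine Finset.prod_ne_zero_iff.mpr fun i hi => ?_
    exact inv_ne_zero (sub_ne_zero.mpr fun h => (Finset.mem_erase.mp hi).1 (hinj h).symm)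
  have huv : ∀ j, u j / v j ≠ 0 := fun j => div_ne_zero (hu0 j) (hv j)
  have hLI : LinearIndependent F H := by
    refine Fintype.linearIndependent_iff.mpr ?_
    intro c hc r0
    set w : Fin (n - k) → F := fun r =>
      if (r : ℕ) < n - k - ℓ - 1 then 0 else (-1 : F) ^ (n - 1) * Ω (n - k - (r : ℕ)) with hw
    set K : F := (∑ r, c r * w r) * ∏ i, α i with hK
    set p : F[X] := (∑ r : Fin (n - k), C (c r) * X ^ ((r : ℕ) + 1)) - C K with hp
    have hHrj : ∀ (r : Fin (n - k)) (j : Fin n),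
        H r j = u j / v j * (α j ^ (r : ℕ) - w r * P_ j) := by
      intro r j
      rw [hH, hw]
      simp only [Matrix.of_apply]
      split_ifs with h
      · ring
      · ring
    have heval : ∀ j, p.eval (α j) = 0 := by
      intro j
      have h1 : ∑ r, c r * H r j = 0 := by
        have := congrFun hc j
        simpa [Finset.sum_apply] using this
      have e1 : ∑ r : Fin (n - k), c r * H r j
          = u j / v j * ((∑ r, c r * α j ^ (r : ℕ)) - (∑ r, c r * w r) * P_ j) := by
        rw [mul_sub, Finset.sum_mul]
        simp only [Finset.mul_sum]
        rw [← Finset.sum_sub_distrib]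
        refine Finset.sum_congr rfl fun r _ => ?_
        rw [hHrj r j]; ring
      have h2 : (∑ r, c r * α j ^ (r : ℕ)) - (∑ r, c r * w r) * P_ j = 0 := by
        rcases mul_eq_zero.mp (e1 ▸ h1) with h | h
        · exact absurd h (huv j)
        · exact h
      have h3 : (∑ r, c r * α j ^ (r : ℕ)) = (∑ r, c r * w r) * P_ j :=
        sub_eq_zero.mp h2
      have hprod : (∏ i, α i) = α j * P_ j := by
        rw [hP]
        exact (Finset.mul_prod_erase Finset.univ α (Finset.mem_univ j)).symm
      have h4 : ∑ r : Fin (n - k), c r * α j ^ ((r : ℕ) + 1)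
          = α j * ∑ r, c r * α j ^ (r : ℕ) := by
        rw [Finset.mul_sum]
        exact Finset.sum_congr rfl fun r _ => by ring
      simp only [hp, eval_sub, eval_finset_sum, eval_mul, eval_C, eval_pow, eval_X]
      rw [h4, h3, hK, hprod]
      ring
    have hdeg : p.natDegree < n := by
      refine lt_of_le_of_lt ?_ hnk
      refine le_trans (natDegree_sub_le _ _) ?_
      simp only [natDegree_C, max_le_iff]
      constructor
      · refine natDegree_sum_le_of_forall_le _ _ fun r _ => ?_
        exact le_trans (natDegree_C_mul_X_pow_le _ _) (by omega)
      · omega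
    have hp0 : p = 0 := by
      refine eq_zero_of_natDegree_lt_card_of_eval_eq_zero p hinj heval ?_
      simpa using hdeg
    have hco : p.coeff ((r0 : ℕ) + 1) = c r0 := by
      simp only [hp, coeff_sub, finset_sum_coeff, coeff_C_mul, coeff_X_pow, coeff_C]
      rw [Finset.sum_eq_single r0]
      · simp
      · intro b _ hb
        have : ((r0 : ℕ) + 1) ≠ ((b : ℕ) + 1) := by
          intro h; exact hb (Fin.ext (by omega))
        simp [this]
        intro h; exact absurd (Fin.ext h).symm hb
      · simp
    rw [hp0] at hco
    simpa using hco.symm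
  rw [hLI.rank_matrix, Fintype.card_fin]
end

section
/- Let G be a generator matrix and H a parity-check matrix of an [n,k] linear code C over F_q. Then C ∩ C⊥ = {0} if and only if the (k+(n-k))×n matrix formed by stacking G on top of H has rank n. -/
open Matrix

theorem stmt8 {F : Type*} [Field F] [Fintype F] (n k : ℕ) (hkn : k ≤ n)
    (C : Submodule F (Fin n → F)) (G : Matrix (Fin k) (Fin n) F)
    (H : Matrix (Fin (n - k)) (Fin n) F)
    (hGind : LinearIndependent F (fun i => G i))
    (hGspan : C = Submodule.span F (Set.range fun i => G i))
    (hHind : LinearIndependent F (fun i => H i))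
    (hHker : ∀ x, x ∈ C ↔ H.mulVec x = 0) :
    (∀ x ∈ C, (∀ y ∈ C, dotProduct x y = 0) → x = 0) ↔
      (Matrix.fromRows G H).rank = n := by
  set M := Matrix.fromRows G H with hM
  -- characterize the orthogonality condition via G
  have hspan : ∀ x : Fin n → F,
      (∀ y ∈ C, dotProduct x y = 0) ↔ G.mulVec x = 0 := by
    intro x
    constructor
    · intro h
      funext i
      have : G i ∈ C := by
        rw [hGspan]
        exact Submodule.subset_span ⟨i, rfl⟩
      have := h (G i) this
      simpa [Matrix.mulVec, dotProduct_comm] using this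
    · intro h y hy
      rw [hGspan] at hy
      induction hy using Submodule.span_induction with
      | mem z hz =>
        obtain ⟨i, rfl⟩ := hz
        have := congrFun h i
        simpa [Matrix.mulVec, dotProduct_comm] using this
      | zero => simp
      | add a b _ _ ha hb => simp [dotProduct_add, ha, hb]
      | smul c a _ ha => simp [dotProduct_smul, ha]
  -- LHS iff kernel of M is trivial
  have hker : (∀ x ∈ C, (∀ y ∈ C, dotProduct x y = 0) → x = 0) ↔
      LinearMap.ker M.mulVecLin = ⊥ := by
    rw [LinearMap.ker_eq_bot']
    constructor
    · intro h x hx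
      have hx' : M.mulVec x = 0 := hx
      have hG : G.mulVec x = 0 := by
        funext i
        have := congrFun hx' (Sum.inl i)
        simpa [hM, Matrix.fromRows_mulVec] using this
      have hH : H.mulVec x = 0 := by
        funext i
        have := congrFun hx' (Sum.inr i)
        simpa [hM, Matrix.fromRows_mulVec] using this
      exact h x ((hHker x).mpr hH) ((hspan x).mpr hG)
    · intro h x hxC hxo
      apply h
      show M.mulVec x = 0
      rw [hM, Matrix.fromRows_mulVec, (hspan x).mp hxo, (hHker x).mp hxC]
      simp
  rw [hker]
  -- rank-nullity
  have hrn := LinearMap.finrank_range_add_finrank_ker M.mulVecLin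
  have hdom : Module.finrank F (Fin n → F) = n := by simp
  rw [hdom] at hrn
  have hrank : M.rank = Module.finrank F (LinearMap.range M.mulVecLin) := rfl
  constructor
  · intro h
    rw [hrank]
    have : Module.finrank F (LinearMap.ker M.mulVecLin) = 0 := by
      rw [h]; exact finrank_bot F _
    omega
  · intro h
    rw [hrank] at h
    have h0 : Module.finrank F (LinearMap.ker M.mulVecLin) = 0 := by omega
    exact Submodule.finrank_eq_zero.mp h0
end

section
/- Let G be a generator matrix of an [n,k] linear code C over F_q with k ≥ 1. Then C is LCD (i.e., C ∩ C⊥ = {0}) if and only if the k×k matrix G Gᵀ is nonsingular. -/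
open Matrix

theorem stmt9 {F : Type*} [Field F] [Fintype F] (n k : ℕ) (hk : 1 ≤ k) (hkn : k ≤ n)
    (C : Submodule F (Fin n → F)) (G : Matrix (Fin k) (Fin n) F)
    (hGind : LinearIndependent F (fun i => G i))
    (hGspan : C = Submodule.span F (Set.range fun i => G i)) :
    (∀ x ∈ C, (∀ y ∈ C, dotProduct x y = 0) → x = 0) ↔
      IsUnit (G * G.transpose).det := by
  have key : ∀ v : Fin k → F, ∀ j, dotProduct (∑ i, v i • G i) (G j) =
      ((G * G.transpose).vecMul v) j := by
    intro v j
    simp only [Matrix.vecMul, dotProduct, Matrix.mul_apply, Matrix.transpose_apply,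
      Finset.sum_apply, Pi.smul_apply, smul_eq_mul, Finset.sum_mul, Finset.mul_sum]
    rw [Finset.sum_comm]
    exact Finset.sum_congr rfl fun i _ => Finset.sum_congr rfl fun t _ => by ring
  have rowmem : ∀ j, G j ∈ C := fun j => by
    rw [hGspan]; exact Submodule.subset_span ⟨j, rfl⟩
  constructor
  · intro h
    rw [isUnit_iff_ne_zero]
    intro hdet
    obtain ⟨v, hv, hv0⟩ := (Matrix.exists_vecMul_eq_zero_iff).mpr hdet
    have hxC : (∑ i, v i • G i) ∈ C :=
      Submodule.sum_mem _ fun i _ => Submodule.smul_mem _ _ (rowmem i)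
    have hx0 : (∑ i, v i • G i) = 0 := by
      refine h _ hxC ?_
      intro y hy
      rw [hGspan, Finsupp.mem_span_range_iff_exists_finsupp] at hy
      obtain ⟨c, rfl⟩ := hy
      unfold Finsupp.sum
      simp only [dotProduct, Finset.sum_apply, Pi.smul_apply, smul_eq_mul,
        Finset.mul_sum]
      rw [Finset.sum_comm]
      refine Finset.sum_eq_zero fun j _ => ?_
      have : (∑ i, v i • G i) ⬝ᵥ G j = 0 := by rw [key, hv0]; rfl
      simp only [dotProduct, Finset.sum_apply, Pi.smul_apply, smul_eq_mul] at this
      calc ∑ t, (∑ i, v i * G i t) * (c j * G j t)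
          = c j * ∑ t, (∑ i, v i * G i t) * G j t := by
            rw [Finset.mul_sum]; exact Finset.sum_congr rfl fun t _ => by ring
        _ = 0 := by rw [this, mul_zero]
    have hz := Fintype.linearIndependent_iff.mp hGind v hx0
    exact hv (funext hz)
  · intro h x hxC hperp
    rw [hGspan, Submodule.mem_span_range_iff_exists_fun] at hxC
    obtain ⟨v, rfl⟩ := hxC
    have hv0 : (G * G.transpose).vecMul v = 0 := by
      funext j
      rw [← key]
      exact hperp (G j) (rowmem j)
    have hv : v = 0 := by
      by_contra hne
      rw [isUnit_iff_ne_zero] at h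
      exact h (Matrix.exists_vecMul_eq_zero_iff.mp ⟨v, hne, hv0⟩)
    simp [hv]
end

section
/- Let q be an odd prime power, n | q-1, λ ∈ F_q* with ord(λ) | (q-1)/n, and write x^n - λ = ∏_{i=1}^n (x - α_i) over F_q. Let 2 ≤ k ≤ (n-2ℓ-1)/2 with 0 ≤ ℓ ≤ n-k-1, η = (η_0,…,η_ℓ) ∈ F_q^{ℓ+1} nonzero, v_i ∈ {-1,1} for k ≤ i ≤ n and v_i ∈ F_q \ {-1,0,1} for 1 ≤ i ≤ k-1. Then the (*)-(L,P)-TGRS code with generator matrix G whose first row is (v_j(1 + ∑_{t=0}^{ℓ} η_t α_j^{k+t}))_j and remaining rows (v_j α_j^i)_j for 1 ≤ i ≤ k-1 is an LCD code. -/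
open Finset Polynomial Matrix

lemma stmt13_root {F : Type*} [Field F] {n : ℕ} (lam : F) (α : Fin n → F)
    (hfact : (X ^ n - C lam : Polynomial F) = ∏ i, (X - C (α i))) (i : Fin n) :
    α i ^ n = lam := by
  have h := congrArg (Polynomial.eval (α i)) hfact
  simp only [eval_sub, eval_pow, eval_X, eval_C, eval_prod] at h
  rw [Finset.prod_eq_zero (Finset.mem_univ i) (by simp)] at h
  exact sub_eq_zero.mp h

lemma stmt13_mem {F : Type*} [Field F] {n : ℕ} (lam : F) (α : Fin n → F)
    (hfact : (X ^ n - C lam : Polynomial F) = ∏ i, (X - C (α i))) (x : F)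
    (hx : x ^ n = lam) : ∃ i, x = α i := by
  have h := congrArg (Polynomial.eval x) hfact
  simp only [eval_sub, eval_pow, eval_X, eval_C, eval_prod, hx, sub_self] at h
  obtain ⟨i, -, hi⟩ := Finset.prod_eq_zero_iff.mp h.symm
  exact ⟨i, sub_eq_zero.mp hi⟩

lemma stmt13_psum {F : Type*} [Field F] {n : ℕ} (lam : F) (hlam : lam ≠ 0)
    (α : Fin n → F) (hinj : Function.Injective α)
    (hfact : (X ^ n - C lam : Polynomial F) = ∏ i, (X - C (α i)))
    {m : ℕ} (hm1 : 1 ≤ m) (hm2 : m < n) : ∑ i, α i ^ m = 0 := by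
  classical
  have hn0 : 0 < n := lt_of_le_of_lt (Nat.zero_le m) hm2
  have hroot := stmt13_root lam α hfact
  have hα0 : ∀ i, α i ≠ 0 := by
    intro i h
    apply hlam
    rw [← hroot i, h, zero_pow hn0.ne']
  set i₀ : Fin n := ⟨0, hn0⟩
  have hex : ∃ i₁, α i₁ ^ m ≠ α i₀ ^ m := by
    by_contra hall
    push_neg at hall
    have hsub : (Finset.univ.image α) ⊆ (X ^ m - C (α i₀ ^ m) : Polynomial F).roots.toFinset := by
      intro x hx
      obtain ⟨i, -, rfl⟩ := Finset.mem_image.mp hx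
      rw [Multiset.mem_toFinset, mem_roots]
      · simp [hall i]
      · exact X_pow_sub_C_ne_zero hm1 _
    have h1 : (Finset.univ.image α).card = n := by
      rw [Finset.card_image_of_injective _ hinj, Finset.card_univ, Fintype.card_fin]
    have h2 := Finset.card_le_card hsub
    have h3 := Multiset.toFinset_card_le (X ^ m - C (α i₀ ^ m) : Polynomial F).roots
    have h4 := Polynomial.card_roots' (X ^ m - C (α i₀ ^ m) : Polynomial F)
    rw [natDegree_X_pow_sub_C] at h4
    omega
  obtain ⟨i₁, hi₁⟩ := hex
  set ζ : F := α i₁ / α i₀ with hζ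
  have hζ0 : ζ ≠ 0 := div_ne_zero (hα0 i₁) (hα0 i₀)
  have hζn : ζ ^ n = 1 := by
    rw [hζ, div_pow, hroot, hroot, div_self hlam]
  have hζm : ζ ^ m ≠ 1 := by
    rw [hζ, div_pow]
    intro h
    exact hi₁ ((div_eq_one_iff_eq (pow_ne_zero m (hα0 i₀))).mp h)
  have hchoice : ∀ i, ∃ j, ζ * α i = α j := by
    intro i
    refine stmt13_mem lam α hfact _ ?_
    rw [mul_pow, hζn, one_mul, hroot]
  choose σ hσ using hchoice
  have hσinj : Function.Injective σ := by
    intro a b hab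
    apply hinj
    apply mul_left_cancel₀ hζ0
    rw [hσ a, hσ b, hab]
  have hσbij : Function.Bijective σ := Finite.injective_iff_bijective.mp hσinj
  have hsum : ∑ i, α (σ i) ^ m = ∑ i, α i ^ m :=
    Fintype.sum_bijective σ hσbij _ _ (fun i => rfl)
  have hsum2 : ∑ i, α (σ i) ^ m = ζ ^ m * ∑ i, α i ^ m := by
    rw [Finset.mul_sum]
    refine Finset.sum_congr rfl fun i _ => ?_
    rw [← hσ i, mul_pow]
  have : (ζ ^ m - 1) * ∑ i, α i ^ m = 0 := by
    rw [sub_mul, one_mul, ← hsum2, hsum, sub_self]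
  rcases mul_eq_zero.mp this with h | h
  · exact absurd (sub_eq_zero.mp h) hζm
  · exact h

lemma stmt13_vdm {F : Type*} [Field F] {m : ℕ} (β : Fin m → F)
    (hinj : Function.Injective β) (h0 : ∀ j, β j ≠ 0) :
    (Matrix.of fun i j : Fin m => β j ^ ((i : ℕ) + 1)).det ≠ 0 := by
  have h : (Matrix.of fun i j : Fin m => β j ^ ((i : ℕ) + 1)) =
      (Matrix.of fun i j : Fin m => β j * (Matrix.vandermonde β)ᵀ i j) := by
    ext i j
    simp [Matrix.vandermonde, pow_succ, mul_comm]
  rw [h, Matrix.det_mul_row, Matrix.det_transpose]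
  exact mul_ne_zero (Finset.prod_ne_zero_iff.mpr fun j _ => h0 j)
    (Matrix.det_vandermonde_ne_zero_iff.mpr hinj)

theorem stmt13 {F : Type*} [Field F] [Fintype F] (hodd : Odd (Fintype.card F))
    (n k ℓ : ℕ) (hn : n ∣ Fintype.card F - 1)
    (lam : F) (hlam : lam ≠ 0) (hord : orderOf lam ∣ (Fintype.card F - 1) / n)
    (α : Fin n → F) (hinj : Function.Injective α)
    (hfact : (X ^ n - C lam : Polynomial F) = ∏ i, (X - C (α i)))
    (hk2 : 2 ≤ k) (hkn : 2 * k ≤ n - 2 * ℓ - 1) (hℓ : ℓ ≤ n - k - 1)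
    (η : ℕ → F) (hη : ∃ t ≤ ℓ, η t ≠ 0)
    (v : Fin n → F)
    (hv1 : ∀ i : Fin n, k - 1 ≤ (i : ℕ) → v i = -1 ∨ v i = 1)
    (hv2 : ∀ i : Fin n, (i : ℕ) < k - 1 → v i ≠ -1 ∧ v i ≠ 0 ∧ v i ≠ 1)
    (G : Matrix (Fin k) (Fin n) F)
    (hG : G = Matrix.of fun (i : Fin k) (j : Fin n) =>
      if (i : ℕ) = 0 then v j * (1 + ∑ t ∈ Finset.range (ℓ + 1), η t * α j ^ (k + t))
      else v j * α j ^ (i : ℕ)) :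
    ∀ x ∈ Submodule.span F (Set.range fun i => G i),
      (∀ y ∈ Submodule.span F (Set.range fun i => G i), dotProduct x y = 0) →
        x = 0 := by
  classical
  subst hG
  intro x hx hperp
  obtain ⟨m, rfl⟩ : ∃ m, k = m + 1 := ⟨k - 1, by omega⟩
  have hm1 : 1 ≤ m := by omega
  have hN : 2 * m + 2 * ℓ + 3 ≤ n := by omega
  -- n is nonzero in F
  have ncast : (n : F) ≠ 0 := by
    intro h
    have hp : (ringChar F).Prime := CharP.char_is_prime F (ringChar F)
    have h1 : ringChar F ∣ n := (ringChar.spec F n).mp h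
    have h2 : ringChar F ∣ Fintype.card F := by
      have := FiniteField.cast_card_eq_zero F
      exact (ringChar.spec F (Fintype.card F)).mp this
    have h3 : ringChar F ∣ Fintype.card F - 1 := h1.trans hn
    have h4 : ringChar F ∣ 1 := by
      have := Nat.dvd_sub h2 h3
      rwa [Nat.sub_sub_self Fintype.card_pos] at this
    exact hp.one_lt.ne' (Nat.dvd_one.mp h4)
  -- basic facts about α
  have hα0 : ∀ j, α j ≠ 0 := by
    intro j h
    apply hlam
    rw [← stmt13_root lam α hfact j, h, zero_pow (by omega : n ≠ 0)]
  have P : ∀ e, 1 ≤ e → e ≤ 2 * m + 2 * ℓ + 2 → ∑ j, α j ^ e = 0 := fun e h1 h2 =>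
    stmt13_psum lam hlam α hinj hfact h1 (by omega)
  -- notation
  set T : Fin n → F := fun j => ∑ t ∈ Finset.range (ℓ + 1), η t * α j ^ (m + 1 + t) with hT
  set r : Fin (m + 1) → Fin n → F :=
    fun i j => if (i : ℕ) = 0 then 1 + T j else α j ^ (i : ℕ) with hr
  set d : Fin n → F := fun j => v j * v j - 1 with hd
  have hGr : ∀ (i : Fin (m + 1)) (j : Fin n),
      (Matrix.of fun (i : Fin (m+1)) (j : Fin n) =>
      if (i : ℕ) = 0 then v j * (1 + ∑ t ∈ Finset.range (ℓ + 1), η t * α j ^ (m + 1 + t))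
      else v j * α j ^ (i : ℕ)) i j = v j * r i j := by
    intro i j
    simp only [Matrix.of_apply, hr]
    split <;> rfl
  have hTpow : ∀ e, e ≤ m + 1 + ℓ → ∑ j, T j * α j ^ e = 0 := by
    intro e he
    have : ∀ j : Fin n, T j * α j ^ e = ∑ t ∈ Finset.range (ℓ + 1), η t * α j ^ (m + 1 + t + e) := by
      intro j
      rw [hT, Finset.sum_mul]
      exact Finset.sum_congr rfl fun t _ => by rw [mul_assoc, ← pow_add]
    rw [Finset.sum_congr rfl fun j _ => this j, Finset.sum_comm]
    refine Finset.sum_eq_zero fun t ht => ?_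
    rw [← Finset.mul_sum, P (m + 1 + t + e) (by omega)
      (by simp only [Finset.mem_range] at ht; omega), mul_zero]
  have hT0 : ∑ j, T j = 0 := by
    have := hTpow 0 (by omega)
    simpa using this
  have hTT : ∑ j, T j * T j = 0 := by
    have : ∀ j : Fin n, T j * T j = ∑ t ∈ Finset.range (ℓ + 1), η t * (T j * α j ^ (m + 1 + t)) := by
      intro j
      nth_rewrite 2 [hT]
      rw [Finset.mul_sum]
      exact Finset.sum_congr rfl fun t _ => by ring
    rw [Finset.sum_congr rfl fun j _ => this j, Finset.sum_comm]
    refine Finset.sum_eq_zero fun t ht => ?_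
    rw [← Finset.mul_sum, hTpow (m + 1 + t) (by simp only [Finset.mem_range] at ht; omega),
      mul_zero]
  have hconst : ∑ _j : Fin n, (1 : F) = (n : F) := by simp
  have hRS : ∀ i i' : Fin (m + 1), ∑ j, r i j * r i' j =
      if (i : ℕ) = 0 ∧ (i' : ℕ) = 0 then (n : F) else 0 := by
    intro i i'
    by_cases hi : (i : ℕ) = 0 <;> by_cases hi' : (i' : ℕ) = 0
    · simp only [hr, hi, hi', ite_true, and_self, if_true]
      have : ∀ j : Fin n, (1 + T j) * (1 + T j) = 1 + (T j + (T j + T j * T j)) := fun j => by ring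
      rw [Finset.sum_congr rfl fun j _ => this j, Finset.sum_add_distrib,
        Finset.sum_add_distrib, Finset.sum_add_distrib, hconst, hT0, hTT]
      ring
    · simp only [hr, hi, hi', ite_true, ite_false, and_false, if_false]
      have : ∀ j : Fin n, (1 + T j) * α j ^ (i' : ℕ) =
          α j ^ (i' : ℕ) + T j * α j ^ (i' : ℕ) := fun j => by ring
      rw [Finset.sum_congr rfl fun j _ => this j, Finset.sum_add_distrib,
        P (i' : ℕ) (by omega) (by have := i'.isLt; omega),
        hTpow (i' : ℕ) (by have := i'.isLt; omega)]
      ring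
    · simp only [hr, hi, hi', ite_true, ite_false, false_and, if_false]
      have : ∀ j : Fin n, α j ^ (i : ℕ) * (1 + T j) =
          α j ^ (i : ℕ) + T j * α j ^ (i : ℕ) := fun j => by ring
      rw [Finset.sum_congr rfl fun j _ => this j, Finset.sum_add_distrib,
        P (i : ℕ) (by omega) (by have := i.isLt; omega),
        hTpow (i : ℕ) (by have := i.isLt; omega)]
      ring
    · simp only [hr, hi, hi', ite_false, false_and, if_false]
      have : ∀ j : Fin n, α j ^ (i : ℕ) * α j ^ (i' : ℕ) = α j ^ ((i : ℕ) + (i' : ℕ)) :=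
        fun j => by rw [← pow_add]
      rw [Finset.sum_congr rfl fun j _ => this j,
        P ((i : ℕ) + (i' : ℕ)) (by omega) (by have := i.isLt; have := i'.isLt; omega)]
  -- properties of d
  have hd0 : ∀ j : Fin n, m ≤ (j : ℕ) → d j = 0 := by
    intro j hj
    rcases hv1 j (by omega) with h | h <;> simp [hd, h]
  have hdne : ∀ j : Fin n, (j : ℕ) < m → d j ≠ 0 := by
    intro j hj h
    obtain ⟨h1, -, h3⟩ := hv2 j (by omega)
    rcases mul_self_eq_one_iff.mp (sub_eq_zero.mp (by simpa [hd] using h)) with h' | h'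
    · exact h3 h'
    · exact h1 h'
  -- x as a combination of the rows
  rw [Submodule.mem_span_range_iff_exists_fun] at hx
  obtain ⟨c, hc⟩ := hx
  have hx' : ∀ j, x j = ∑ i, c i * (v j * r i j) := by
    intro j
    rw [← hc, Finset.sum_apply]
    exact Finset.sum_congr rfl fun i _ => by rw [Pi.smul_apply, smul_eq_mul, hGr]
  set s : Fin n → F := fun j => ∑ i, c i * r i j with hs
  -- orthogonality to each row
  have horth : ∀ i' : Fin (m + 1), ∑ j, x j * (v j * r i' j) = 0 := by
    intro i'
    have hmem : (Matrix.of fun (i : Fin (m+1)) (j : Fin n) =>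
        if (i : ℕ) = 0 then v j * (1 + ∑ t ∈ Finset.range (ℓ + 1), η t * α j ^ (m + 1 + t))
        else v j * α j ^ (i : ℕ)) i' ∈ Submodule.span F (Set.range fun i =>
        (Matrix.of fun (i : Fin (m+1)) (j : Fin n) =>
        if (i : ℕ) = 0 then v j * (1 + ∑ t ∈ Finset.range (ℓ + 1), η t * α j ^ (m + 1 + t))
        else v j * α j ^ (i : ℕ)) i) :=
      Submodule.subset_span (Set.mem_range_self i')
    have := hperp _ hmem
    rw [dotProduct] at this
    rw [← this]
    exact Finset.sum_congr rfl fun j _ => by rw [hGr]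
  have hB : ∀ i i' : Fin (m + 1), ∑ j, (v j * r i j) * (v j * r i' j) =
      (if (i : ℕ) = 0 ∧ (i' : ℕ) = 0 then (n : F) else 0) + ∑ j, d j * (r i j * r i' j) := by
    intro i i'
    have he : ∀ j : Fin n, (v j * r i j) * (v j * r i' j) =
        r i j * r i' j + d j * (r i j * r i' j) := by
      intro j; simp only [hd]; ring
    rw [Finset.sum_congr rfl fun j _ => he j, Finset.sum_add_distrib, hRS]
  -- the key linear relations
  have key : ∀ i' : Fin (m + 1),
      (if (i' : ℕ) = 0 then (n : F) * c 0 else 0) + ∑ j, d j * s j * r i' j = 0 := by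
    intro i'
    have h1 : ∑ j, x j * (v j * r i' j) =
        ∑ i, c i * ∑ j, (v j * r i j) * (v j * r i' j) :=
      calc ∑ j, x j * (v j * r i' j)
          = ∑ j, ∑ i, c i * ((v j * r i j) * (v j * r i' j)) := by
            refine Finset.sum_congr rfl fun j _ => ?_
            rw [hx', Finset.sum_mul]
            exact Finset.sum_congr rfl fun i _ => by ring
        _ = ∑ i, ∑ j, c i * ((v j * r i j) * (v j * r i' j)) := Finset.sum_comm
        _ = ∑ i, c i * ∑ j, (v j * r i j) * (v j * r i' j) :=
            Finset.sum_congr rfl fun i _ => (Finset.mul_sum _ _ _).symm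
    have h2 : ∀ j : Fin n, d j * s j * r i' j = ∑ i, c i * (d j * (r i j * r i' j)) := by
      intro j
      rw [hs]
      simp only [Finset.mul_sum, Finset.sum_mul]
      exact Finset.sum_congr rfl fun i _ => by ring
    have h3 : ∑ i, c i * ∑ j, (v j * r i j) * (v j * r i' j)
        = (if (i' : ℕ) = 0 then (n : F) * c 0 else 0) + ∑ j, d j * s j * r i' j := by
      rw [Finset.sum_congr rfl fun i _ => by rw [hB i i']]
      have hma : ∀ i : Fin (m + 1),
          c i * ((if (i : ℕ) = 0 ∧ (i' : ℕ) = 0 then (n : F) else 0)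
            + ∑ j, d j * (r i j * r i' j)) =
          c i * (if (i : ℕ) = 0 ∧ (i' : ℕ) = 0 then (n : F) else 0)
            + c i * ∑ j, d j * (r i j * r i' j) := fun i => mul_add _ _ _
      rw [Finset.sum_congr rfl fun i _ => hma i, Finset.sum_add_distrib]
      congr 1
      · rw [Fin.sum_univ_succ]
        simp only [Fin.val_succ, Fin.val_zero, Nat.succ_ne_zero, false_and, if_false,
          mul_zero, Finset.sum_const_zero, add_zero, true_and, eq_self_iff_true, if_true]
        split <;> ring
      · calc ∑ i, c i * ∑ j, d j * (r i j * r i' j)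
            = ∑ i, ∑ j, c i * (d j * (r i j * r i' j)) :=
              Finset.sum_congr rfl fun i _ => Finset.mul_sum _ _ _
          _ = ∑ j, ∑ i, c i * (d j * (r i j * r i' j)) := Finset.sum_comm
          _ = ∑ j, d j * s j * r i' j := Finset.sum_congr rfl fun j _ => (h2 j).symm
    rw [← h3, ← h1]
    exact horth i'
  -- restriction of sums to the first m coordinates
  have hmn : m < n := by omega
  set e : Fin m → Fin n := fun j => ⟨(j : ℕ), lt_trans j.isLt hmn⟩ with he
  have heinj : Function.Injective e := by
    intro a b hab
    have h2 := congrArg Fin.val hab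
    exact Fin.ext h2
  have hrestrict : ∀ h : Fin n → F, (∀ j : Fin n, m ≤ (j : ℕ) → h j = 0) →
      ∑ j, h j = ∑ j : Fin m, h (e j) := by
    intro h hzero
    have h1 : ∑ j ∈ Finset.univ.map ⟨e, heinj⟩, h j = ∑ j : Fin m, h (e j) :=
      Finset.sum_map _ _ _
    rw [← h1]
    refine (Finset.sum_subset (Finset.subset_univ _) ?_).symm
    intro j _ hj
    refine hzero j ?_
    by_contra hlt
    push_neg at hlt
    exact hj (Finset.mem_map.mpr ⟨⟨(j : ℕ), hlt⟩, Finset.mem_univ _, Fin.ext rfl⟩)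
  -- the Vandermonde matrix
  set A : Matrix (Fin m) (Fin m) F := Matrix.of fun i j => α (e j) ^ ((i : ℕ) + 1) with hA
  have hAdet : A.det ≠ 0 :=
    stmt13_vdm (fun j => α (e j)) (fun a b hab => heinj (hinj hab)) (fun j => hα0 (e j))
  -- Step A : d j * s j = 0 for all j
  have hw : (fun j : Fin m => d (e j) * s (e j)) = 0 := by
    apply Matrix.eq_zero_of_mulVec_eq_zero hAdet
    funext i
    show (∑ j, A i j * (d (e j) * s (e j))) = 0
    have hk0 := key (Fin.succ ⟨(i : ℕ), by omega⟩)
    rw [if_neg (by simp), zero_add] at hk0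
    have hrs : ∀ j : Fin n, d j * s j * r (Fin.succ ⟨(i : ℕ), by omega⟩) j =
        d j * s j * α j ^ ((i : ℕ) + 1) := fun j => by simp [hr]
    rw [Finset.sum_congr rfl fun j _ => hrs j] at hk0
    rw [hrestrict _ (fun j hj => by rw [hd0 j hj, zero_mul, zero_mul])] at hk0
    rw [← hk0]
    refine Finset.sum_congr rfl fun j _ => ?_
    simp only [hA, Matrix.of_apply]
    ring
  have hse : ∀ j : Fin m, s (e j) = 0 := by
    intro j
    have := congrFun hw j
    simp only [Pi.zero_apply] at this
    rcases mul_eq_zero.mp this with h | h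
    · exact absurd h (hdne (e j) j.isLt)
    · exact h
  have hds : ∀ j : Fin n, d j * s j = 0 := by
    intro j
    by_cases hj : (j : ℕ) < m
    · have : j = e ⟨(j : ℕ), hj⟩ := Fin.ext rfl
      rw [this, hse ⟨(j : ℕ), hj⟩, mul_zero]
    · rw [hd0 j (by omega), zero_mul]
  -- Step B : c 0 = 0
  have hc0 : c 0 = 0 := by
    have hk0 := key 0
    rw [if_pos (by simp), Finset.sum_eq_zero (fun j _ => by rw [hds j, zero_mul]),
      add_zero] at hk0
    exact (mul_eq_zero.mp hk0).resolve_left ncast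
  -- Step C : the other coefficients vanish
  have hw' : (fun i : Fin m => c (Fin.succ i)) = 0 := by
    apply Matrix.eq_zero_of_mulVec_eq_zero (by rwa [Matrix.det_transpose] : Aᵀ.det ≠ 0)
    funext j
    show (∑ i, Aᵀ j i * c (Fin.succ i)) = 0
    have hsej := hse j
    simp only [hs] at hsej
    rw [Fin.sum_univ_succ] at hsej
    simp only [hc0, zero_mul, zero_add] at hsej
    rw [← hsej]
    refine Finset.sum_congr rfl fun i _ => ?_
    simp only [hA, Matrix.transpose_apply, Matrix.of_apply, hr, Fin.val_succ,
      Nat.succ_ne_zero, if_false]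
    ring
  have hcall : ∀ i : Fin (m + 1), c i = 0 := by
    intro i
    refine Fin.cases hc0 (fun i => ?_) i
    exact congrFun hw' i
  rw [← hc]
  exact Finset.sum_eq_zero fun i _ => by rw [hcall i, zero_smul]
end

section
/- Let q be an odd prime power, n | q-1, λ ∈ F_q* with ord(λ) | (q-1)/n, and x^n - λ = ∏_{i=1}^n (x - α_i) over F_q. Let 2 ≤ k ≤ (n-2ℓ-1)/2 with 0 ≤ ℓ ≤ n-k-1, η ∈ F_q^{ℓ+1} nonzero, v_i ∈ {-1,1} for 1 ≤ i ≤ n-k+1 and v_i ∈ F_q \ {-1,0,1} for n-k+2 ≤ i ≤ n. Then the (*)-(L,P)-TGRS code with generator matrix whose first row is (v_j(1 + ∑_{t=0}^{ℓ} η_t α_j^{k+t}))_j and remaining rows (v_j α_j^i)_j for 1 ≤ i ≤ k-1 is an LCD code. -/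
open Finset Polynomial Matrix

lemma root_aux {F : Type*} [Field F] {n : ℕ} {lam : F} (α : Fin n → F)
    (hfact : (X ^ n - C lam : Polynomial F) = ∏ i, (X - C (α i))) :
    ∀ j, α j ^ n = lam := by
  intro j
  have h := congrArg (Polynomial.eval (α j)) hfact
  simp only [eval_sub, eval_pow, eval_X, eval_C, eval_prod] at h
  rw [Finset.prod_eq_zero (Finset.mem_univ j) (by ring)] at h
  linear_combination h

lemma mem_range_aux {F : Type*} [Field F] {n : ℕ} {lam : F} (α : Fin n → F)
    (hfact : (X ^ n - C lam : Polynomial F) = ∏ i, (X - C (α i)))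
    {b : F} (hb : b ^ n = lam) : ∃ i, α i = b := by
  have h := congrArg (Polynomial.eval b) hfact
  simp only [eval_sub, eval_pow, eval_X, eval_C, eval_prod, hb, sub_self] at h
  obtain ⟨i, -, hi⟩ := Finset.prod_eq_zero_iff.mp h.symm
  exact ⟨i, by linear_combination -hi⟩

lemma psum_aux {F : Type*} [Field F] [Fintype F] {n : ℕ}
    (hn : n ∣ Fintype.card F - 1)
    {lam : F} (hlam : lam ≠ 0) (α : Fin n → F) (hinj : Function.Injective α)
    (hfact : (X ^ n - C lam : Polynomial F) = ∏ i, (X - C (α i)))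
    {m : ℕ} (hm0 : 0 < m) (hmn : m < n) : ∑ j, α j ^ m = 0 := by
  classical
  have hn0 : 0 < n := hm0.trans hmn
  obtain ⟨g, hg⟩ := IsCyclic.exists_generator (α := Fˣ)
  have hog : orderOf g = Fintype.card F - 1 := by
    rw [orderOf_eq_card_of_forall_mem_zpowers hg, Nat.card_eq_fintype_card, Fintype.card_units]
  have hcard1 : 0 < Fintype.card F - 1 := by
    have := Fintype.one_lt_card (α := F)
    omega
  set ζ : Fˣ := g ^ (orderOf g / n) with hζ
  have hoζ : orderOf ζ = n :=
    orderOf_pow_orderOf_div (by omega) (hog ▸ hn)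
  have hζn : ((ζ : F)) ^ n = 1 := by
    have h := pow_orderOf_eq_one ζ
    rw [hoζ] at h
    calc ((ζ:F))^n = ((ζ^n : Fˣ) : F) := by push_cast; ring
    _ = 1 := by rw [h]; rfl
  have hζm : ((ζ : F)) ^ m ≠ 1 := by
    intro h
    have : ζ ^ m = 1 := Units.ext (by push_cast; exact h)
    have := orderOf_dvd_of_pow_eq_one this
    rw [hoζ] at this
    exact absurd (Nat.le_of_dvd hm0 this) (by omega)
  have hroot := root_aux α hfact
  have hτ : ∀ j : Fin n, ∃ i, α i = (ζ : F) * α j := by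
    intro j
    exact mem_range_aux α hfact (by rw [mul_pow, hζn, one_mul, hroot])
  choose τ hτs using hτ
  have hτinj : Function.Injective τ := by
    intro a b hab
    have : (ζ : F) * α a = (ζ : F) * α b := by rw [← hτs, ← hτs, hab]
    exact hinj (mul_left_cancel₀ (Units.ne_zero ζ) this)
  have hbij : Function.Bijective τ := Finite.injective_iff_bijective.mp hτinj
  have h1 : ∑ j, α (τ j) ^ m = ∑ j, α j ^ m := hbij.sum_comp fun b => α b ^ m
  have h2 : ∑ j, α (τ j) ^ m = (ζ : F) ^ m * ∑ j, α j ^ m := by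
    rw [Finset.mul_sum]
    exact Finset.sum_congr rfl fun j _ => by rw [hτs, mul_pow]
  have h3 : ((ζ : F) ^ m - 1) * ∑ j, α j ^ m = 0 := by
    rw [sub_mul, one_mul, ← h2, h1, sub_self]
  rcases mul_eq_zero.mp h3 with h | h
  · exact absurd (by linear_combination h) hζm
  · exact h

lemma evalsum_aux {F : Type*} [Field F] {n : ℕ} (α : Fin n → F)
    (hps : ∀ m, 0 < m → m < n → ∑ j, α j ^ m = 0)
    (P : Polynomial F) (hdeg : P.natDegree < n) :
    ∑ j, P.eval (α j) = (n : F) * P.coeff 0 := by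
  have he : ∀ j, P.eval (α j) =
      ∑ i ∈ Finset.range (P.natDegree + 1), P.coeff i * α j ^ i :=
    fun j => Polynomial.eval_eq_sum_range _
  simp_rw [he]
  rw [Finset.sum_comm, Finset.sum_range_succ']
  have h1 : ∀ i ∈ Finset.range P.natDegree,
      ∑ j, P.coeff (i + 1) * α j ^ (i + 1) = 0 := by
    intro i hi
    rw [← Finset.mul_sum, hps (i + 1) (Nat.succ_pos i)
      (by have := Finset.mem_range.mp hi; omega), mul_zero]
  rw [Finset.sum_congr rfl h1]
  simp [mul_comm]

theorem stmt15 {F : Type*} [Field F] [Fintype F] (hodd : Odd (Fintype.card F))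
    (n k ℓ : ℕ) (hn : n ∣ Fintype.card F - 1)
    (lam : F) (hlam : lam ≠ 0) (hord : orderOf lam ∣ (Fintype.card F - 1) / n)
    (α : Fin n → F) (hinj : Function.Injective α)
    (hfact : (X ^ n - C lam : Polynomial F) = ∏ i, (X - C (α i)))
    (hk2 : 2 ≤ k) (hkn : 2 * k ≤ n - 2 * ℓ - 1) (hℓ : ℓ ≤ n - k - 1)
    (η : ℕ → F) (hη : ∃ t ≤ ℓ, η t ≠ 0)
    (v : Fin n → F)
    (hv1 : ∀ i : Fin n, (i : ℕ) < n - k + 1 → v i = -1 ∨ v i = 1)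
    (hv2 : ∀ i : Fin n, n - k + 1 ≤ (i : ℕ) → v i ≠ -1 ∧ v i ≠ 0 ∧ v i ≠ 1)
    (G : Matrix (Fin k) (Fin n) F)
    (hG : G = Matrix.of fun (i : Fin k) (j : Fin n) =>
      if (i : ℕ) = 0 then v j * (1 + ∑ t ∈ Finset.range (ℓ + 1), η t * α j ^ (k + t))
      else v j * α j ^ (i : ℕ)) :
    ∀ x ∈ Submodule.span F (Set.range fun i => G i),
      (∀ y ∈ Submodule.span F (Set.range fun i => G i), dotProduct x y = 0) →
        x = 0 := by
  classical
  intro x hx hperp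
  have hn5 : 2 * k + 2 * ℓ + 1 ≤ n := by omega
  have hGij : ∀ (i : Fin k) (j : Fin n), G i j =
      if (i : ℕ) = 0 then v j * (1 + ∑ t ∈ Finset.range (ℓ + 1), η t * α j ^ (k + t))
      else v j * α j ^ (i : ℕ) := by
    intro i j; rw [hG]; rfl
  have hps : ∀ m, 0 < m → m < n → ∑ j, α j ^ m = 0 :=
    fun m hm0 hmn => psum_aux hn hlam α hinj hfact hm0 hmn
  have hroot := root_aux α hfact
  have hα0 : ∀ j, α j ≠ 0 := by
    intro j h
    apply hlam
    rw [← hroot j, h, zero_pow (by omega)]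
  have hnF : (n : F) ≠ 0 := by
    intro h
    have hchar : ringChar F ∣ n := (CharP.cast_eq_zero_iff F (ringChar F) n).mp h
    obtain ⟨e, hp, hcard⟩ := FiniteField.card F (ringChar F)
    have hd1 : ringChar F ∣ Fintype.card F := by
      rw [hcard]; exact dvd_pow_self _ (by positivity)
    have hd2 : ringChar F ∣ Fintype.card F - 1 := hchar.trans hn
    have hd3 : ringChar F ∣ 1 := by
      have h4 : Fintype.card F - (Fintype.card F - 1) = 1 := by
        have := Fintype.one_lt_card (α := F); omega
      exact h4 ▸ Nat.dvd_sub hd1 hd2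
    exact hp.one_lt.ne' (Nat.dvd_one.mp hd3)
  obtain ⟨c, hc⟩ := (Submodule.mem_span_range_iff_exists_fun F).mp hx
  set f : Polynomial F := ∑ t ∈ Finset.range (ℓ + 1), C (η t) * X ^ (k + t) with hfdef
  set g : Polynomial F := ∑ i : Fin k, C (c i) * (if (i : ℕ) = 0 then 1 + f else X ^ (i : ℕ))
    with hgdef
  have hfeval : ∀ b : F, f.eval b = ∑ t ∈ Finset.range (ℓ + 1), η t * b ^ (k + t) := by
    intro b; rw [hfdef, eval_finset_sum]; simp
  have hxj : ∀ j, x j = v j * g.eval (α j) := by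
    intro j
    rw [← hc, hgdef, eval_finset_sum, Finset.mul_sum, Finset.sum_apply]
    refine Finset.sum_congr rfl fun i _ => ?_
    rw [Pi.smul_apply, smul_eq_mul, hGij]
    by_cases h : (i : ℕ) = 0
    · simp only [h, if_true, eval_mul, eval_C, eval_add, eval_one, hfeval]
      ring
    · simp only [h, if_false, eval_mul, eval_C, eval_pow, eval_X]
      ring
  set u : Fin n → F := fun j => v j ^ 2 - 1 with hudef
  have hu0 : ∀ j : Fin n, (j : ℕ) < n - k + 1 → u j = 0 := by
    intro j hj
    rcases hv1 j hj with h | h <;> (show v j ^ 2 - 1 = 0; rw [h]; ring)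
  have hu1 : ∀ j : Fin n, n - k + 1 ≤ (j : ℕ) → u j ≠ 0 := by
    intro j hj
    obtain ⟨h1, h2, h3⟩ := hv2 j hj
    show v j ^ 2 - 1 ≠ 0
    have hrw : v j ^ 2 - 1 = (v j - 1) * (v j + 1) := by ring
    rw [hrw]
    refine mul_ne_zero (sub_ne_zero.mpr h3) fun h => h1 ?_
    exact eq_neg_of_add_eq_zero_left h
  -- index embedding into the tail block
  have hek : ∀ s : Fin (k-1), n - k + 1 + (s:ℕ) < n := by
    intro s; have := s.isLt; omega
  set e : Fin (k-1) → Fin n := fun s => ⟨n - k + 1 + (s:ℕ), hek s⟩ with hedef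
  have heinj : Function.Injective e := by
    intro a b hab
    have h1 := congrArg (fun t : Fin n => (t:ℕ)) hab
    simp only [hedef] at h1
    exact Fin.ext (by omega)
  set β : Fin (k-1) → F := fun s => α (e s) with hβdef
  have hβinj : Function.Injective β := fun a b h => heinj (hinj h)
  have hesum : ∀ h : Fin n → F, ∑ j, u j * h j = ∑ s, u (e s) * h (e s) := by
    intro h
    have himg : ∑ j ∈ Finset.univ.image e, (u j * h j) = ∑ s, u (e s) * h (e s) :=
      Finset.sum_image (fun a _ b _ hab => heinj hab)
    rw [← himg]
    refine (Finset.sum_subset (Finset.subset_univ _) ?_).symm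
    intro j _ hj
    have hjlt : (j:ℕ) < n - k + 1 := by
      by_contra hge
      push_neg at hge
      refine hj (Finset.mem_image.mpr ⟨⟨(j:ℕ) - (n - k + 1), by have := j.isLt; omega⟩,
        Finset.mem_univ _, ?_⟩)
      apply Fin.ext
      simp only [hedef]
      omega
    rw [hu0 j hjlt, zero_mul]
  have hsplit : ∀ P : Polynomial F, P.natDegree < n →
      ∑ j, v j ^ 2 * P.eval (α j) = (n : F) * P.coeff 0 + ∑ s, u (e s) * P.eval (β s) := by
    intro P hP
    have h1 : ∀ j : Fin n, v j ^ 2 * P.eval (α j) = P.eval (α j) + u j * P.eval (α j) := by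
      intro j; show _ = _ + (v j ^ 2 - 1) * _; ring
    rw [Finset.sum_congr rfl fun j _ => h1 j, Finset.sum_add_distrib,
      evalsum_aux α hps P hP, hesum fun j => P.eval (α j)]
  have hdegf : f.natDegree ≤ k + ℓ := by
    rw [hfdef]
    apply Polynomial.natDegree_sum_le_of_forall_le
    intro t ht
    exact (Polynomial.natDegree_C_mul_X_pow_le _ _).trans
      (by have := Finset.mem_range.mp ht; omega)
  have hdeg1f : (1 + f).natDegree ≤ k + ℓ :=
    (Polynomial.natDegree_add_le _ _).trans (by simp [hdegf])
  have hdegg : g.natDegree ≤ k + ℓ := by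
    rw [hgdef]
    apply Polynomial.natDegree_sum_le_of_forall_le
    intro i _
    apply (Polynomial.natDegree_C_mul_le _ _).trans
    by_cases h : (i:ℕ) = 0
    · rw [if_pos h]; exact hdeg1f
    · rw [if_neg h, natDegree_X_pow]; have := i.isLt; omega
  have hfc0 : f.coeff 0 = 0 := by
    rw [hfdef, Polynomial.finset_sum_coeff]
    apply Finset.sum_eq_zero
    intro t _
    rw [Polynomial.coeff_C_mul, Polynomial.coeff_X_pow, if_neg (by omega), mul_zero]
  set i0 : Fin k := ⟨0, by omega⟩ with hi0
  have hgc0 : g.coeff 0 = c i0 := by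
    rw [hgdef, Polynomial.finset_sum_coeff, Finset.sum_eq_single i0]
    · rw [if_pos rfl, Polynomial.coeff_C_mul, Polynomial.coeff_add,
        Polynomial.coeff_one, hfc0]
      norm_num
    · intro b _ hb
      have hb0 : (b:ℕ) ≠ 0 := fun h => hb (Fin.ext h)
      rw [if_neg hb0, Polynomial.coeff_C_mul, Polynomial.coeff_X_pow,
        if_neg (fun hh => hb0 hh.symm), mul_zero]
    · exact fun h => absurd (Finset.mem_univ i0) h
  have hH : ∀ i : Fin k, ∑ j, x j * G i j = 0 := by
    intro i
    have := hperp (G i) (Submodule.subset_span ⟨i, rfl⟩)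
    simpa [dotProduct] using this
  have hE : ∀ m : ℕ, 1 ≤ m → m < k →
      ∑ s, u (e s) * (g.eval (β s) * β s ^ m) = 0 := by
    intro m hm1 hmk
    have h0 := hH ⟨m, hmk⟩
    have h1 : ∀ j, x j * G ⟨m, hmk⟩ j = v j ^ 2 * (g * X ^ m).eval (α j) := by
      intro j
      rw [hxj j, hGij, if_neg (by simp; omega)]
      simp only [eval_mul, eval_pow, eval_X, Fin.val_mk]
      ring
    rw [Finset.sum_congr rfl fun j _ => h1 j] at h0
    rw [hsplit _ (by
      refine lt_of_le_of_lt (Polynomial.natDegree_mul_le) ?_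
      have := Polynomial.natDegree_X_pow (R := F) m
      omega)] at h0
    rw [Polynomial.coeff_mul_X_pow' g m 0, if_neg (by omega), mul_zero, zero_add] at h0
    rw [← h0]
    exact Finset.sum_congr rfl fun s _ => by rw [eval_mul, eval_pow, eval_X]
  set V : Matrix (Fin (k-1)) (Fin (k-1)) F := Matrix.of fun i s => β s ^ ((i:ℕ) + 1)
    with hVdef
  set w : Fin (k-1) → F := fun s => u (e s) * g.eval (β s) with hwdef
  have hVw : V *ᵥ w = 0 := by
    funext i
    have hE' := hE ((i:ℕ) + 1) (by omega) (by have := i.isLt; omega)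
    show ∑ s, V i s * w s = 0
    rw [← hE']
    refine Finset.sum_congr rfl fun s _ => ?_
    show β s ^ ((i:ℕ)+1) * (u (e s) * g.eval (β s)) = _
    ring
  have hdetV : V.det ≠ 0 := by
    have hVt : Vᵀ = Matrix.diagonal β * Matrix.vandermonde β := by
      ext s i
      rw [Matrix.transpose_apply, Matrix.diagonal_mul, Matrix.vandermonde_apply]
      show β s ^ ((i:ℕ)+1) = _
      ring
    have hdet : V.det = (∏ s, β s) * (Matrix.vandermonde β).det := by
      rw [← Matrix.det_transpose, hVt, Matrix.det_mul, Matrix.det_diagonal]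
    rw [hdet]
    exact mul_ne_zero (Finset.prod_ne_zero_iff.mpr fun s _ => hα0 _)
      (Matrix.det_vandermonde_ne_zero_iff.mpr hβinj)
  have hw0 : w = 0 := Matrix.eq_zero_of_mulVec_eq_zero hdetV hVw
  have hgβ : ∀ s, g.eval (β s) = 0 := by
    intro s
    have h1 : u (e s) * g.eval (β s) = 0 := congrFun hw0 s
    have h2 : u (e s) ≠ 0 := hu1 (e s) (by simp [hedef])
    exact (mul_eq_zero.mp h1).resolve_left h2
  have hc00 : c i0 = 0 := by
    have h0 := hH i0
    have h1 : ∀ j, x j * G i0 j = v j ^ 2 * (g * (1 + f)).eval (α j) := by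
      intro j
      rw [hxj j, hGij, if_pos rfl]
      simp only [eval_mul, eval_add, eval_one, hfeval]
      ring
    rw [Finset.sum_congr rfl fun j _ => h1 j] at h0
    rw [hsplit _ (by
      refine lt_of_le_of_lt (Polynomial.natDegree_mul_le) ?_
      omega)] at h0
    rw [Polynomial.mul_coeff_zero, hgc0] at h0
    have h1f0 : (1 + f).coeff 0 = 1 := by
      rw [Polynomial.coeff_add, Polynomial.coeff_one, hfc0]; norm_num
    rw [h1f0, mul_one] at h0
    have h2 : ∑ s, u (e s) * (g * (1 + f)).eval (β s) = 0 :=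
      Finset.sum_eq_zero fun s _ => by rw [eval_mul, hgβ, zero_mul, mul_zero]
    rw [h2, add_zero] at h0
    exact (mul_eq_zero.mp h0).resolve_left hnF
  have hdegg' : g.natDegree ≤ k - 1 := by
    rw [hgdef]
    apply Polynomial.natDegree_sum_le_of_forall_le
    intro i _
    by_cases h : (i:ℕ) = 0
    · have hii : i = i0 := Fin.ext h
      rw [hii, hc00]
      simp
    · rw [if_neg h]
      exact (Polynomial.natDegree_C_mul_le _ _).trans
        (by rw [natDegree_X_pow]; have := i.isLt; omega)
  have hg0 : g = 0 := by
    apply Polynomial.eq_zero_of_natDegree_lt_card_of_eval_eq_zero' g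
      (insert (0:F) (Finset.univ.image β))
    · intro b hb
      rcases Finset.mem_insert.mp hb with h | h
      · rw [h, ← Polynomial.coeff_zero_eq_eval_zero, hgc0, hc00]
      · obtain ⟨s, -, rfl⟩ := Finset.mem_image.mp h
        exact hgβ s
    · rw [Finset.card_insert_of_notMem (by
        simp only [Finset.mem_image, Finset.mem_univ, true_and]
        rintro ⟨s, hs⟩
        exact hα0 _ hs),
        Finset.card_image_of_injective _ hβinj, Finset.card_univ, Fintype.card_fin]
      omega
  have hcall : ∀ i : Fin k, c i = 0 := by
    intro i
    by_cases h : (i:ℕ) = 0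
    · rw [(Fin.ext h : i = i0)]; exact hc00
    · have hco : g.coeff (i:ℕ) = c i := by
        rw [hgdef, Polynomial.finset_sum_coeff, Finset.sum_eq_single i]
        · rw [if_neg h, Polynomial.coeff_C_mul, Polynomial.coeff_X_pow, if_pos rfl, mul_one]
        · intro b _ hb
          by_cases hb0 : (b:ℕ) = 0
          · rw [(Fin.ext hb0 : b = i0), hc00]
            simp
          · rw [if_neg hb0, Polynomial.coeff_C_mul, Polynomial.coeff_X_pow,
              if_neg (fun hh => hb (Fin.ext hh.symm)), mul_zero]
        · exact fun hh => absurd (Finset.mem_univ i) hh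
      rw [← hco, hg0, Polynomial.coeff_zero]
  rw [← hc]
  funext j
  rw [Finset.sum_apply]
  apply Finset.sum_eq_zero
  intro i _
  rw [Pi.smul_apply, smul_eq_mul, hcall i, zero_mul]
end

section
/- Let q be an odd prime power, n | q-1, λ ∈ F_q* with ord(λ) | (q-1)/n, and x^n - λ = ∏_{i=1}^n (x - α_i) over F_q. Let 0 ≤ r ≤ ℓ, 2 ≤ k = (n-ℓ-r)/2, η ∈ F_q^{ℓ+1} nonzero, v_i ∈ {-1,1} for 1 ≤ i ≤ n-k+1, v_i ∈ F_q \ {-1,0,1} for n-k+2 ≤ i ≤ n. Set P = ∏_j α_j, Ω_i = ∑_{t=0}^{ℓ} η_t S_{t+1-i}(α_1,…,α_n), Φ_i = (-1)^{n-1} P Ω_i. If 1 + ∑_{t=r}^{ℓ} η_t Φ_{ℓ+1+r-t} ≠ 0, then the (*)-(L,P)-TGRS code with generator matrix whose first row is (v_j(1 + ∑_{t=0}^{ℓ} η_t α_j^{k+t}))_j and remaining rows (v_j α_j^i)_j for 1 ≤ i ≤ k-1 is an LCD code. -/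
open Finset Polynomial Matrix

lemma aux_zeta {F : Type*} [Field F] [Fintype F] {n : ℕ} (hn0 : n ≠ 0)
    (hn : n ∣ Fintype.card F - 1) : ∃ ζ : F, orderOf ζ = n := by
  classical
  obtain ⟨g, hg⟩ := IsCyclic.exists_ofOrder_eq_natCard (α := Fˣ)
  have hcard : orderOf g = Fintype.card F - 1 := by
    rw [hg, Nat.card_eq_fintype_card, Fintype.card_units]
  have hpos : 0 < Fintype.card F - 1 := by
    have h1 := Fintype.card_units (α := F)
    have h2 : 0 < Fintype.card Fˣ := Fintype.card_pos
    omega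
  refine ⟨((g ^ ((Fintype.card F - 1) / n) : Fˣ) : F), ?_⟩
  rw [orderOf_units, orderOf_pow, hcard, Nat.gcd_eq_right (Nat.div_dvd_of_dvd hn),
    Nat.div_div_self hn (by omega)]

lemma aux_root {F : Type*} [Field F] {n : ℕ} {lam : F} {α : Fin n → F}
    (hfact : (X ^ n - C lam : Polynomial F) = ∏ i, (X - C (α i))) (j : Fin n) :
    α j ^ n = lam := by
  have := congrArg (Polynomial.eval (α j)) hfact
  simp only [eval_sub, eval_pow, eval_X, eval_C, eval_prod] at this
  rw [Finset.prod_eq_zero (Finset.mem_univ j) (by simp)] at this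
  exact sub_eq_zero.mp this

lemma aux_psum {F : Type*} [Field F] [Fintype F] {n : ℕ} {lam : F} {α : Fin n → F}
    (hn0 : n ≠ 0) (hlam : lam ≠ 0) (hn : n ∣ Fintype.card F - 1)
    (hinj : Function.Injective α)
    (hfact : (X ^ n - C lam : Polynomial F) = ∏ i, (X - C (α i)))
    {m : ℕ} (hm : ¬ n ∣ m) : ∑ j, α j ^ m = 0 := by
  classical
  obtain ⟨ζ, hζ⟩ := aux_zeta hn0 hn
  have hnpos : 0 < n := Nat.pos_of_ne_zero hn0
  have hζn : ζ ^ n = 1 := by rw [← hζ]; exact pow_orderOf_eq_one ζ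
  set j0 : Fin n := ⟨0, hnpos⟩
  have hα0 : α j0 ≠ 0 := by
    intro h
    exact hlam (by rw [← aux_root hfact j0, h, zero_pow hn0])
  set β : Fin n → F := fun i => α j0 * ζ ^ (i : ℕ) with hβ
  have hβinj : Function.Injective β := by
    intro i i' h
    have := mul_left_cancel₀ hα0 h
    exact Fin.ext (pow_injOn_Iio_orderOf (by simpa [hζ] using i.isLt)
      (by simpa [hζ] using i'.isLt) this)
  have hβmem : ∀ i, ∃ j, α j = β i := by
    intro i
    have : Polynomial.eval (β i) (∏ j, (X - C (α j))) = 0 := by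
      rw [← hfact]
      simp only [eval_sub, eval_pow, eval_X, eval_C]
      have : β i ^ n = lam := by
        rw [hβ]
        rw [mul_pow, aux_root hfact j0, ← pow_mul, mul_comm (i : ℕ) n, pow_mul, hζn,
          one_pow, mul_one]
      rw [this, sub_self]
    rw [eval_prod, Finset.prod_eq_zero_iff] at this
    obtain ⟨j, _, hj⟩ := this
    simp only [eval_sub, eval_X, eval_C, sub_eq_zero] at hj
    exact ⟨j, hj.symm⟩
  have himg : Finset.image β Finset.univ = Finset.image α Finset.univ := by
    apply Finset.eq_of_subset_of_card_le
    · intro x hx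
      simp only [Finset.mem_image] at hx ⊢
      obtain ⟨i, _, rfl⟩ := hx
      obtain ⟨j, hj⟩ := hβmem i
      exact ⟨j, Finset.mem_univ j, hj⟩
    · rw [Finset.card_image_of_injective _ hinj, Finset.card_image_of_injective _ hβinj]
  have key : ∑ j, α j ^ m = ∑ i, β i ^ m := by
    rw [show ∑ j : Fin n, α j ^ m = ∑ x ∈ Finset.image α Finset.univ, x ^ m from
        (Finset.sum_image (fun a _ b _ h => hinj h)).symm,
      show ∑ i : Fin n, β i ^ m = ∑ x ∈ Finset.image β Finset.univ, x ^ m from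
        (Finset.sum_image (fun a _ b _ h => hβinj h)).symm, himg]
  rw [key]
  have hζm : ζ ^ m ≠ 1 := by
    intro h
    exact hm (hζ ▸ orderOf_dvd_of_pow_eq_one h)
  calc ∑ i : Fin n, β i ^ m = α j0 ^ m * ∑ i ∈ Finset.range n, (ζ ^ m) ^ i := by
        rw [Finset.mul_sum, ← Fin.sum_univ_eq_sum_range]
        exact Finset.sum_congr rfl fun i _ => by
          rw [hβ]; rw [mul_pow, ← pow_mul, ← pow_mul, mul_comm (i:ℕ) m]
    _ = 0 := by
        rw [geom_sum_eq hζm, ← pow_mul, mul_comm m n, pow_mul, hζn, one_pow, sub_self,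
          zero_div, mul_zero]


-- polynomial identity
lemma aux_poly {F : Type*} [Field F] {n : ℕ} {lam : F} {α : Fin n → F}
    (hn0 : n ≠ 0) (hlam : lam ≠ 0) (hinj : Function.Injective α)
    (hfact : (X ^ n - C lam : Polynomial F) = ∏ i, (X - C (α i))) :
    (∏ j, (1 - C (α j) * X) : Polynomial F) = 1 - C lam * X ^ n := by
  classical
  have hα : ∀ j, α j ≠ 0 := fun j h => hlam (by rw [← aux_root hfact j, h, zero_pow hn0])
  have hαn : ∀ j, α j ^ n = lam := fun j => aux_root hfact j
  set q1 : Polynomial F := ∏ j, (X - C (α j)⁻¹) with hq1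
  set q2 : Polynomial F := X ^ n - C lam⁻¹ with hq2
  have hq1monic : q1.Monic := monic_prod_of_monic _ _ fun j _ => monic_X_sub_C _
  have hq2monic : q2.Monic := by
    apply monic_X_pow_sub_C _ hn0
  have hq1deg : q1.natDegree = n := by
    rw [hq1, natDegree_prod_of_monic _ _ fun j _ => monic_X_sub_C _]
    simp
  have hq2deg : q2.natDegree = n := by
    rw [hq2]
    apply natDegree_X_pow_sub_C
  have hinv : Function.Injective (fun j => (α j)⁻¹) := by
    intro a b h
    exact hinj (by
      have := congrArg (fun x => x⁻¹) h
      simpa [inv_inv] using this)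
  have key : q1 = q2 := by
    by_contra hne
    set d := q2 - q1 with hd
    have hdne : d ≠ 0 := sub_ne_zero.mpr (Ne.symm hne)
    have hdeg : d.natDegree < n := by
      have : d.degree < n := by
        rw [hd]
        calc (q2 - q1).degree < q2.degree := by
              apply degree_sub_lt
              · rw [degree_eq_natDegree hq1monic.ne_zero, degree_eq_natDegree hq2monic.ne_zero,
                  hq1deg, hq2deg]
              · exact hq2monic.ne_zero
              · rw [hq1monic.leadingCoeff, hq2monic.leadingCoeff]
          _ ≤ n := by rw [degree_eq_natDegree hq2monic.ne_zero, hq2deg]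
      exact natDegree_lt_iff_degree_lt hdne |>.mpr this
    have hroots : ∀ j, d.IsRoot (α j)⁻¹ := by
      intro j
      have h1 : q1.IsRoot (α j)⁻¹ := by
        rw [hq1, IsRoot, eval_prod]
        exact Finset.prod_eq_zero (mem_univ j) (by simp)
      have h2 : q2.IsRoot (α j)⁻¹ := by
        rw [hq2, IsRoot]
        simp [inv_pow, hαn j]
      simp [hd, IsRoot, h2.eq_zero, h1.eq_zero]
    have hsub : Finset.image (fun j => (α j)⁻¹) Finset.univ ⊆ d.roots.toFinset := by
      intro x hx
      simp only [Finset.mem_image] at hx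
      obtain ⟨j, _, rfl⟩ := hx
      rw [Multiset.mem_toFinset, mem_roots hdne]
      exact hroots j
    have hcard : n ≤ d.roots.toFinset.card := by
      calc n = (Finset.image (fun j => (α j)⁻¹) Finset.univ).card := by
            rw [Finset.card_image_of_injective _ hinv, Finset.card_univ, Fintype.card_fin]
        _ ≤ _ := Finset.card_le_card hsub
    have : d.roots.toFinset.card < n := by
      calc d.roots.toFinset.card ≤ Multiset.card d.roots := d.roots.toFinset_card_le
        _ ≤ d.natDegree := d.card_roots'
        _ < n := hdeg
    omega
  have hfac : ∀ j, (1 - C (α j) * X : Polynomial F) = -C (α j) * (X - C (α j)⁻¹) := by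
    intro j
    rw [neg_mul, mul_sub, ← C_mul, mul_inv_cancel₀ (hα j), _root_.map_one, neg_sub]
  calc (∏ j, (1 - C (α j) * X) : Polynomial F)
      = (∏ j, (-C (α j))) * q1 := by
        rw [hq1, ← Finset.prod_mul_distrib]
        exact Finset.prod_congr rfl fun j _ => hfac j
    _ = C (-lam) * q2 := by
        rw [key]
        congr 1
        have := congrArg (Polynomial.eval 0) hfact
        simp only [eval_sub, eval_pow, eval_X, eval_C, eval_prod, zero_pow hn0, zero_sub] at this
        calc ∏ j, -C (α j) = ∏ j, C (-(α j)) := Finset.prod_congr rfl fun j _ => (C_neg).symm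
          _ = C (∏ j, -(α j)) := (map_prod _ _ _).symm
          _ = C (-lam) := by rw [← this]
    _ = 1 - C lam * X ^ n := by
        rw [hq2, C_neg, neg_mul, mul_sub, ← C_mul, mul_inv_cancel₀ hlam, _root_.map_one, neg_sub]

-- geometric series inverse
lemma aux_geom {F : Type*} [Field F] (a : F) :
    ((1 : PowerSeries F) - PowerSeries.C a * PowerSeries.X) * PowerSeries.mk (fun e => a ^ e)
      = 1 := by
  ext m
  rw [sub_mul, one_mul, mul_assoc, map_sub, PowerSeries.coeff_C_mul]
  cases m with
  | zero => simp [PowerSeries.coeff_zero_X_mul]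
  | succ m =>
      rw [PowerSeries.coeff_succ_X_mul, PowerSeries.coeff_mk, PowerSeries.coeff_mk,
        PowerSeries.coeff_one]
      simp [pow_succ, mul_comm]

lemma aux_coeff_prod_mk {F : Type*} [Field F] {n : ℕ} (α : Fin n → F) (m : ℕ) :
    PowerSeries.coeff m (∏ j, PowerSeries.mk fun e => (α j) ^ e) = hsymm n m α := by
  classical
  rw [PowerSeries.coeff_prod]
  rw [hsymm]
  refine Finset.sum_nbij' (i := fun l => (l : Fin n → ℕ))
    (j := fun d => Finsupp.equivFunOnFinite.symm d) ?_ ?_ ?_ ?_ ?_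
  · intro l hl
    rw [Finset.mem_finsuppAntidiag] at hl
    rw [Finset.Nat.mem_antidiagonalTuple]
    exact hl.1
  · intro d hd
    rw [Finset.Nat.mem_antidiagonalTuple] at hd
    rw [Finset.mem_finsuppAntidiag]
    constructor
    · rw [← hd]
      exact Finset.sum_congr rfl fun i _ => rfl
    · exact Finset.subset_univ _
  · intro l _
    exact Finsupp.equivFunOnFinite.symm_apply_apply l
  · intro d _; rfl
  · intro l _
    exact Finset.prod_congr rfl fun i _ => by rw [PowerSeries.coeff_mk]

lemma aux_hsymm_zero {F : Type*} [Field F] [Fintype F] {n : ℕ} {lam : F} {α : Fin n → F}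
    (hn0 : n ≠ 0) (hlam : lam ≠ 0) (hinj : Function.Injective α)
    (hfact : (X ^ n - C lam : Polynomial F) = ∏ i, (X - C (α i)))
    {m : ℕ} (hm0 : 0 < m) (hmn : m < n) : hsymm n m α = 0 := by
  set Φ : PowerSeries F := ∏ j, PowerSeries.mk fun e => (α j) ^ e with hΦdef
  have h2 : (∏ j, ((1 : PowerSeries F) - PowerSeries.C (α j) * PowerSeries.X))
      = 1 - PowerSeries.C lam * PowerSeries.X ^ n := by
    have h := congrArg (fun p : Polynomial F => (p : PowerSeries F))
      (aux_poly hn0 hlam hinj hfact)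
    have h' := congrArg (Polynomial.coeToPowerSeries.ringHom (R := F)) (aux_poly hn0 hlam hinj hfact)
    simpa only [map_prod, map_sub, _root_.map_one, _root_.map_mul, map_pow, Polynomial.coe_sub, Polynomial.coe_one, Polynomial.coe_mul, Polynomial.coe_pow,
      Polynomial.coeToPowerSeries.ringHom_apply, Polynomial.coe_C, Polynomial.coe_X] using h'
  have h1 : ((1 : PowerSeries F) - PowerSeries.C lam * PowerSeries.X ^ n) * Φ = 1 := by
    rw [← h2, hΦdef, ← Finset.prod_mul_distrib]
    rw [Finset.prod_congr rfl fun j _ => aux_geom (α j)]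
    exact Finset.prod_const_one
  have := congrArg (PowerSeries.coeff m) h1
  rw [sub_mul, one_mul, map_sub, PowerSeries.coeff_one, if_neg hm0.ne',
    show PowerSeries.C lam * PowerSeries.X ^ n * Φ
      = (PowerSeries.C lam * Φ) * PowerSeries.X ^ n by ring,
    PowerSeries.coeff_mul_X_pow', if_neg (by omega), sub_zero, aux_coeff_prod_mk] at this
  exact this

lemma aux_hsymm_zero' {F : Type*} [Field F] {n : ℕ} (α : Fin n → F) :
    hsymm n 0 α = 1 := by
  rw [hsymm, Finset.Nat.antidiagonalTuple_zero_right]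
  simp

lemma aux_vdet {F : Type*} [Field F] {m : ℕ} (β : Fin m → F) (hβ : Function.Injective β)
    (h0 : ∀ s, β s ≠ 0) :
    (Matrix.of fun s e : Fin m => β s ^ ((e : ℕ) + 1)).det ≠ 0 := by
  have heq : (Matrix.of fun s e : Fin m => β s ^ ((e : ℕ) + 1))
      = Matrix.diagonal β * Matrix.vandermonde β := by
    ext s e
    rw [Matrix.diagonal_mul, Matrix.of_apply, Matrix.vandermonde_apply, pow_succ']
  rw [heq, Matrix.det_mul, Matrix.det_diagonal, Matrix.det_vandermonde]
  apply mul_ne_zero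
  · exact Finset.prod_ne_zero_iff.mpr fun s _ => h0 s
  · apply Finset.prod_ne_zero_iff.mpr
    intro i _
    apply Finset.prod_ne_zero_iff.mpr
    intro j hj
    rw [Finset.mem_Ioi] at hj
    exact sub_ne_zero.mpr fun h => hj.ne (hβ h.symm)

lemma aux_V1 {F : Type*} [Field F] {m : ℕ} (β : Fin m → F) (hβ : Function.Injective β)
    (h0 : ∀ s, β s ≠ 0) (c : Fin m → F)
    (h : ∀ e : Fin m, ∑ s, c s * β s ^ ((e : ℕ) + 1) = 0) : ∀ s, c s = 0 := by
  classical
  set A : Matrix (Fin m) (Fin m) F := Matrix.of fun e s : Fin m => β s ^ ((e : ℕ) + 1) with hA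
  have hdet : A.det ≠ 0 := by
    have : A = (Matrix.of fun s e : Fin m => β s ^ ((e : ℕ) + 1)).transpose := by
      ext e s; rfl
    rw [this, Matrix.det_transpose]
    exact aux_vdet β hβ h0
  have hmv : A.mulVec c = 0 := by
    funext e
    rw [Matrix.mulVec, dotProduct]
    simpa only [hA, Matrix.of_apply, Pi.zero_apply, mul_comm] using h e
  intro s
  rw [Matrix.eq_zero_of_mulVec_eq_zero hdet hmv]
  rfl

lemma aux_V2 {F : Type*} [Field F] {m : ℕ} (β : Fin m → F) (hβ : Function.Injective β)
    (h0 : ∀ s, β s ≠ 0) (c : Fin m → F)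
    (h : ∀ s : Fin m, ∑ e, c e * β s ^ ((e : ℕ) + 1) = 0) : ∀ e, c e = 0 := by
  classical
  set A : Matrix (Fin m) (Fin m) F := Matrix.of fun s e : Fin m => β s ^ ((e : ℕ) + 1) with hA
  have hmv : A.mulVec c = 0 := by
    funext s
    rw [Matrix.mulVec, dotProduct]
    simpa only [hA, Matrix.of_apply, Pi.zero_apply, mul_comm] using h s
  intro e
  rw [Matrix.eq_zero_of_mulVec_eq_zero (aux_vdet β hβ h0) hmv]
  rfl
theorem stmt16 {F : Type*} [Field F] [Fintype F] (hodd : Odd (Fintype.card F))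
    (n k ℓ r : ℕ) (hn : n ∣ Fintype.card F - 1)
    (lam : F) (hlam : lam ≠ 0) (hord : orderOf lam ∣ (Fintype.card F - 1) / n)
    (α : Fin n → F) (hinj : Function.Injective α)
    (hfact : (X ^ n - C lam : Polynomial F) = ∏ i, (X - C (α i)))
    (hr : r ≤ ℓ) (hk2 : 2 ≤ k) (hkn : n = 2 * k + ℓ + r)
    (η : ℕ → F) (hη : ∃ t ≤ ℓ, η t ≠ 0)
    (v : Fin n → F)
    (hv1 : ∀ i : Fin n, (i : ℕ) < n - k + 1 → v i = -1 ∨ v i = 1)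
    (hv2 : ∀ i : Fin n, n - k + 1 ≤ (i : ℕ) → v i ≠ -1 ∧ v i ≠ 0 ∧ v i ≠ 1)
    (Ω Φ : ℕ → F)
    (hΩ : Ω = fun (i : ℕ) => ∑ t ∈ Finset.range (ℓ + 1),
      η t * hsymmZ n ((t : ℤ) + 1 - (i : ℤ)) α)
    (hΦ : Φ = fun (i : ℕ) => (-1 : F) ^ (n - 1) * (∏ j, α j) * Ω i)
    (hne : 1 + ∑ t ∈ Finset.Icc r ℓ, η t * Φ (ℓ + 1 + r - t) ≠ 0)
    (G : Matrix (Fin k) (Fin n) F)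
    (hG : G = Matrix.of fun (i : Fin k) (j : Fin n) =>
      if (i : ℕ) = 0 then v j * (1 + ∑ t ∈ Finset.range (ℓ + 1), η t * α j ^ (k + t))
      else v j * α j ^ (i : ℕ)) :
    ∀ x ∈ Submodule.span F (Set.range fun i => G i),
      (∀ y ∈ Submodule.span F (Set.range fun i => G i), dotProduct x y = 0) →
        x = 0 := by
  classical
  have hn0 : n ≠ 0 := by omega
  have hα : ∀ j, α j ≠ 0 := fun j h => hlam (by rw [← aux_root hfact j, h, zero_pow hn0])
  have hαn : ∀ j, α j ^ n = lam := fun j => aux_root hfact j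
  -- power sums
  have hmu : ∀ m : ℕ, 0 < m → m < 2 * n → m ≠ n → ∑ j, α j ^ m = 0 := by
    intro m h1 h2 h3
    apply aux_psum hn0 hlam hn hinj hfact
    rintro ⟨c, rfl⟩
    rcases Nat.lt_or_ge c 2 with hc | hc
    · interval_cases c <;> omega
    · have := Nat.mul_le_mul_left n hc
      omega
  have hmun : ∑ j, α j ^ n = (n : F) * lam := by
    rw [Finset.sum_congr rfl fun j _ => hαn j, Finset.sum_const, Finset.card_univ,
      Fintype.card_fin, nsmul_eq_mul]
  -- (n : F) ≠ 0
  have hnF : (n : F) ≠ 0 := by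
    intro h0
    obtain ⟨m, hm⟩ := hn
    have hcard1 : 1 ≤ Fintype.card F := Fintype.card_pos
    have hcast : ((Fintype.card F - 1 : ℕ) : F) = -1 := by
      rw [Nat.cast_sub hcard1, FiniteField.cast_card_eq_zero]
      simp
    rw [hm] at hcast
    push_cast at hcast
    rw [h0, zero_mul] at hcast
    exact one_ne_zero (neg_eq_zero.mp hcast.symm)
  -- the key constant
  set T : F := ∑ t ∈ Finset.Icc r ℓ, η t * η (ℓ + r - t) with hT
  -- (-1)^(n-1) * ∏ α = lam
  have hP : ((-1 : F)) ^ (n - 1) * ∏ j, α j = lam := by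
    have h0 := congrArg (Polynomial.eval 0) hfact
    simp only [eval_sub, eval_pow, eval_X, eval_C, eval_prod, zero_pow hn0, zero_sub] at h0
    have h1 : ∏ j : Fin n, (-α j) = (-1 : F) ^ n * ∏ j, α j := by
      rw [show (fun j : Fin n => -α j) = fun j => (-1) * α j by funext j; ring,
        Finset.prod_mul_distrib, Finset.prod_const, Finset.card_univ, Fintype.card_fin]
    rw [h1] at h0
    have h2 : ((-1 : F)) ^ (n - 1) * ((-1 : F) ^ n * ∏ j, α j) = (-1) ^ (n - 1) * (- lam) := by
      rw [← h0]
    rw [← mul_assoc, ← pow_add] at h2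
    have hodd' : Odd (n - 1 + n) := ⟨n - 1, by omega⟩
    rw [hodd'.neg_one_pow] at h2
    have h3 : ∏ j : Fin n, α j = (-1 : F) ^ (n - 1) * lam := by
      have := congrArg (fun z : F => -z) h2
      simpa using this
    rw [h3, ← mul_assoc, ← pow_add]
    have heven : Even (n - 1 + (n - 1)) := ⟨n - 1, rfl⟩
    rw [heven.neg_one_pow, one_mul]
  -- hne ⇒ 1 + lam * T ≠ 0
  have hΩt : ∀ t, r ≤ t → t ≤ ℓ → Ω (ℓ + 1 + r - t) = η (ℓ + r - t) := by
    intro t htr htl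
    simp only [hΩ]
    have hstep : ∀ t' ∈ Finset.range (ℓ + 1),
        η t' * hsymmZ n ((t' : ℤ) + 1 - ((ℓ + 1 + r - t : ℕ) : ℤ)) α
          = if t' = ℓ + r - t then η t' * 1 else 0 := by
      intro t' ht'
      rw [Finset.mem_range] at ht'
      have hcast : ((ℓ + 1 + r - t : ℕ) : ℤ) = (ℓ : ℤ) + 1 + r - t := by omega
      rw [hcast]
      by_cases heq : t' = ℓ + r - t
      · rw [if_pos heq]
        have hz : (t' : ℤ) + 1 - ((ℓ : ℤ) + 1 + r - t) = 0 := by omega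
        rw [hz]
        simp only [hsymmZ]
        rw [if_pos le_rfl]
        norm_num [aux_hsymm_zero']
      · rw [if_neg heq]
        rcases lt_trichotomy ((t' : ℤ) + 1 - ((ℓ : ℤ) + 1 + r - t)) 0 with hlt | hz | hgt
        · simp only [hsymmZ]
          rw [if_neg (by omega), mul_zero]
        · exfalso; apply heq; omega
        · simp only [hsymmZ]
          rw [if_pos (by omega)]
          rw [aux_hsymm_zero hn0 hlam hinj hfact (by omega)
            (by
              have : ((t' : ℤ) + 1 - ((ℓ : ℤ) + 1 + r - t)).toNat ≤ ℓ := by omega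
              omega), mul_zero]
    rw [Finset.sum_congr rfl hstep, Finset.sum_ite_eq' (Finset.range (ℓ + 1)) (ℓ + r - t)
      (fun t' => η t' * 1), if_pos (by rw [Finset.mem_range]; omega), mul_one]
  have hc₀ : (1 : F) + lam * T ≠ 0 := by
    have hsum : ∑ t ∈ Finset.Icc r ℓ, η t * Φ (ℓ + 1 + r - t) = lam * T := by
      rw [hT, Finset.mul_sum]
      apply Finset.sum_congr rfl
      intro t ht
      rw [Finset.mem_Icc] at ht
      simp only [hΦ]
      rw [hΩt t ht.1 ht.2, mul_assoc, ← mul_assoc ((-1 : F) ^ (n - 1)), hP]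
      ring
    rw [hsum] at hne
    exact hne
  -- reindex k = k' + 1
  obtain ⟨k', rfl⟩ : ∃ k', k = k' + 1 := ⟨k - 1, by omega⟩
  intro x hx hxy
  obtain ⟨a, ha⟩ := (Submodule.mem_span_range_iff_exists_fun F).mp hx
  -- the basis functions
  set g : Fin (k' + 1) → F → F := fun i y =>
    if (i : ℕ) = 0 then (1 + ∑ t ∈ Finset.range (ℓ + 1), η t * y ^ ((k' + 1) + t))
    else y ^ (i : ℕ) with hgdef
  have hGg : ∀ i j, G i j = v j * g i (α j) := by
    intro i j
    rw [hG, hgdef]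
    simp only [Matrix.of_apply]
    by_cases h : (i : ℕ) = 0 <;> simp [h]
  set Fp : F → F := fun y => ∑ i, a i * g i y with hFp
  have hxj : ∀ j, x j = v j * Fp (α j) := by
    intro j
    rw [← ha]
    rw [Finset.sum_apply]
    rw [hFp, Finset.mul_sum]
    apply Finset.sum_congr rfl
    intro i _
    rw [Pi.smul_apply, smul_eq_mul, hGg]
    ring
  have hDD : ∀ i' : Fin (k' + 1), ∑ j, (v j * v j) * (Fp (α j) * g i' (α j)) = 0 := by
    intro i'
    have h := hxy (G i') (Submodule.subset_span (Set.mem_range_self i'))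
    rw [dotProduct] at h
    rw [← h]
    apply Finset.sum_congr rfl
    intro j _
    rw [hxj, hGg]
    ring

  -- inner products of basis functions
  have hgg : ∀ i i' : Fin (k' + 1), (i : ℕ) ≠ 0 → (i' : ℕ) ≠ 0 →
      ∑ j, g i (α j) * g i' (α j) = 0 := by
    intro i i' hi hi'
    have hi1 := i.isLt
    have hi'1 := i'.isLt
    calc ∑ j, g i (α j) * g i' (α j) = ∑ j, α j ^ ((i : ℕ) + (i' : ℕ)) := by
          apply Finset.sum_congr rfl
          intro j _
          simp only [hgdef, if_neg hi, if_neg hi', pow_add]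
      _ = 0 := hmu _ (by omega) (by omega) (by omega)
  have hg0sum : ∀ i' : Fin (k' + 1), (i' : ℕ) ≠ 0 →
      ∑ j, g 0 (α j) * g i' (α j) = 0 := by
    intro i' hi'
    have hi'1 := i'.isLt
    have hcalc : ∀ j, g 0 (α j) * g i' (α j)
        = α j ^ (i' : ℕ) + ∑ t ∈ Finset.range (ℓ + 1), η t * α j ^ ((k' + 1) + t + (i' : ℕ)) := by
      intro j
      simp only [hgdef, if_neg hi']
      rw [if_pos (by simp)]
      rw [add_mul, one_mul, Finset.sum_mul]
      congr 1
      apply Finset.sum_congr rfl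
      intro t _
      rw [pow_add (α j) ((k'+1)+t) (i' : ℕ), mul_assoc]
    rw [Finset.sum_congr rfl fun j _ => hcalc j, Finset.sum_add_distrib]
    rw [hmu (i' : ℕ) (by omega) (by omega) (by omega), Finset.sum_comm, zero_add]
    apply Finset.sum_eq_zero
    intro t ht
    rw [Finset.mem_range] at ht
    rw [← Finset.mul_sum, hmu ((k' + 1) + t + (i' : ℕ)) (by omega) (by omega) (by omega), mul_zero]
  have hg00sum : ∑ j, g 0 (α j) * g 0 (α j) = (n : F) * (1 + lam * T) := by
    set U : Fin n → F := fun j => ∑ t ∈ Finset.range (ℓ + 1), η t * α j ^ ((k' + 1) + t) with hU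
    have hcalc : ∀ j, g 0 (α j) * g 0 (α j) = 1 + (U j + (U j + U j * U j)) := by
      intro j
      simp only [hgdef, hU]
      rw [if_pos (by simp)]
      ring
    rw [Finset.sum_congr rfl fun j _ => hcalc j, Finset.sum_add_distrib,
      Finset.sum_add_distrib, Finset.sum_add_distrib]
    have hUz : ∑ j, U j = 0 := by
      rw [hU, Finset.sum_comm]
      apply Finset.sum_eq_zero
      intro t ht
      rw [Finset.mem_range] at ht
      rw [← Finset.mul_sum, hmu ((k' + 1) + t) (by omega) (by omega) (by omega), mul_zero]
    have hUU : ∑ j, U j * U j = T * ((n : F) * lam) := by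
      have hprod : ∀ j, U j * U j = ∑ t ∈ Finset.range (ℓ + 1), ∑ t' ∈ Finset.range (ℓ + 1),
          η t * η t' * α j ^ (((k' + 1) + t) + ((k' + 1) + t')) := by
        intro j
        rw [hU, Finset.sum_mul_sum]
        apply Finset.sum_congr rfl; intro t _
        apply Finset.sum_congr rfl; intro t' _
        rw [pow_add]
        ring
      rw [Finset.sum_congr rfl fun j _ => hprod j, Finset.sum_comm]
      have hinner : ∀ t ∈ Finset.range (ℓ + 1),
          (∑ j, ∑ t' ∈ Finset.range (ℓ + 1),
            η t * η t' * α j ^ (((k' + 1) + t) + ((k' + 1) + t')))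
          = if r ≤ t then η t * η (ℓ + r - t) * ((n : F) * lam) else 0 := by
        intro t ht
        rw [Finset.mem_range] at ht
        rw [Finset.sum_comm]
        have hmuval : ∀ t' ∈ Finset.range (ℓ + 1),
            ∑ j, η t * η t' * α j ^ (((k' + 1) + t) + ((k' + 1) + t'))
            = if t' = ℓ + r - t then η t * η t' * ((n : F) * lam) else 0 := by
          intro t' ht'
          rw [Finset.mem_range] at ht'
          rw [← Finset.mul_sum]
          by_cases heq : t' = ℓ + r - t
          · rw [if_pos heq]
            have hexp : ((k' + 1) + t) + ((k' + 1) + t') = n := by omega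
            rw [hexp, hmun]
          · rw [if_neg heq, hmu (((k' + 1) + t) + ((k' + 1) + t')) (by omega) (by omega)
              (by omega), mul_zero]
        rw [Finset.sum_congr rfl hmuval,
          Finset.sum_ite_eq' (Finset.range (ℓ + 1)) (ℓ + r - t)
            (fun t' => η t * η t' * ((n : F) * lam))]
        by_cases hrt : r ≤ t
        · rw [if_pos (by rw [Finset.mem_range]; omega), if_pos hrt]
        · rw [if_neg (by rw [Finset.mem_range]; omega), if_neg hrt]
      rw [Finset.sum_congr rfl hinner, ← Finset.sum_filter]
      have hfil : (Finset.range (ℓ + 1)).filter (fun t => r ≤ t) = Finset.Icc r ℓ := by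
        ext t
        simp only [Finset.mem_filter, Finset.mem_range, Finset.mem_Icc]
        omega
      rw [hfil, hT, ← Finset.sum_mul]
    rw [hUz, hUU]
    simp only [Finset.sum_const, Finset.card_univ, Fintype.card_fin, nsmul_eq_mul, mul_one]
    ring
  -- sums against Fp
  have hFpg : ∀ i' : Fin (k' + 1),
      ∑ j, Fp (α j) * g i' (α j) = ∑ i, a i * ∑ j, g i (α j) * g i' (α j) := by
    intro i'
    have h1 : ∀ j, Fp (α j) * g i' (α j) = ∑ i, a i * (g i (α j) * g i' (α j)) := by
      intro j
      rw [hFp]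
      simp only []
      rw [Finset.sum_mul]
      apply Finset.sum_congr rfl
      intro i _
      ring
    rw [Finset.sum_congr rfl fun j _ => h1 j, Finset.sum_comm]
    apply Finset.sum_congr rfl
    intro i _
    rw [← Finset.mul_sum]
  have hS1 : ∀ i' : Fin (k' + 1), (i' : ℕ) ≠ 0 → ∑ j, Fp (α j) * g i' (α j) = 0 := by
    intro i' hi'
    rw [hFpg i']
    apply Finset.sum_eq_zero
    intro i _
    by_cases h : (i : ℕ) = 0
    · have : i = 0 := Fin.ext (by simpa using h)
      rw [this, hg0sum i' hi', mul_zero]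
    · rw [hgg i i' h hi', mul_zero]
  have hS2 : ∑ j, Fp (α j) * g 0 (α j) = a 0 * ((n : F) * (1 + lam * T)) := by
    rw [hFpg 0, Fin.sum_univ_succ]
    rw [hg00sum]
    have hz : ∀ e : Fin k', a e.succ * ∑ j, g e.succ (α j) * g 0 (α j) = 0 := by
      intro e
      have : ∑ j, g e.succ (α j) * g 0 (α j) = ∑ j, g 0 (α j) * g e.succ (α j) := by
        apply Finset.sum_congr rfl; intro j _; ring
      rw [this, hg0sum e.succ (by simp [Fin.val_succ]), mul_zero]
    rw [Finset.sum_eq_zero fun e _ => hz e, add_zero]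
  -- the index set J
  set J : Fin k' → Fin n := fun s => ⟨n - (k' + 1) + 1 + (s : ℕ), by
    have := s.isLt; omega⟩ with hJ
  have hJval : ∀ s, (J s : ℕ) = n - (k' + 1) + 1 + (s : ℕ) := fun s => rfl
  have hJinj : Function.Injective J := by
    intro s s' h
    have h2 := congrArg Fin.val h
    rw [hJval, hJval] at h2
    exact Fin.ext (by omega)
  set w : Fin n → F := fun j => v j * v j - 1 with hw
  have hw0 : ∀ j : Fin n, (j : ℕ) < n - (k' + 1) + 1 → w j = 0 := by
    intro j hj
    rcases hv1 j hj with h | h <;> (rw [hw]; simp only [h]; ring)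
  have hwne : ∀ s, w (J s) ≠ 0 := by
    intro s h
    obtain ⟨h1, h2, h3⟩ := hv2 (J s) (by rw [hJval]; omega)
    rw [hw] at h
    simp only [] at h
    rcases mul_self_eq_one_iff.mp (sub_eq_zero.mp h) with h' | h'
    · exact h3 h'
    · exact h1 h'
  have hsplit : ∀ f : Fin n → F,
      ∑ j, (v j * v j) * f j = ∑ j, f j + ∑ s, w (J s) * f (J s) := by
    intro f
    have h1 : ∀ j, (v j * v j) * f j = f j + w j * f j := by
      intro j; rw [hw]; ring
    rw [Finset.sum_congr rfl fun j _ => h1 j, Finset.sum_add_distrib]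
    congr 1
    rw [show ∑ j, w j * f j = ∑ j ∈ Finset.image J Finset.univ, w j * f j from
      (Finset.sum_subset (Finset.subset_univ _) (by
        intro j _ hj
        rw [hw0 j ?_, zero_mul]
        by_contra hge
        push_neg at hge
        exact hj (Finset.mem_image.mpr ⟨⟨(j : ℕ) - (n - (k' + 1) + 1), by have := j.isLt; omega⟩,
          Finset.mem_univ _, Fin.ext (by rw [hJval]; simp only []; omega)⟩))).symm]
    rw [Finset.sum_image (fun s _ s' _ h => hJinj h)]
  -- Fp vanishes on the J points
  have hFpJ : ∀ s, Fp (α (J s)) = 0 := by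
    have hc := aux_V1 (fun s => α (J s)) (fun s s' h => hJinj (hinj h)) (fun s => hα _)
      (fun s => w (J s) * Fp (α (J s))) (by
        intro e
        have hrow := hDD e.succ
        rw [hsplit (fun j => Fp (α j) * g e.succ (α j))] at hrow
        rw [hS1 e.succ (by simp [Fin.val_succ]), zero_add] at hrow
        rw [← hrow]
        apply Finset.sum_congr rfl
        intro s _
        simp only [hgdef, Fin.val_succ, if_neg (Nat.succ_ne_zero (e : ℕ))]
        ring)
    intro s
    rcases mul_eq_zero.mp (hc s) with h | h
    · exact absurd h (hwne s)
    · exact h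
  -- a 0 = 0
  have ha0 : a 0 = 0 := by
    have hrow := hDD 0
    rw [hsplit (fun j => Fp (α j) * g 0 (α j))] at hrow
    rw [hS2] at hrow
    rw [Finset.sum_eq_zero (fun s _ => by rw [hFpJ s, zero_mul, mul_zero]), add_zero] at hrow
    exact (mul_eq_zero.mp hrow).resolve_right (mul_ne_zero hnF hc₀)
  -- remaining coefficients vanish
  have hasucc : ∀ e : Fin k', a e.succ = 0 := by
    apply aux_V2 (fun s => α (J s)) (fun s s' h => hJinj (hinj h)) (fun s => hα _)
    intro s
    have h0 := hFpJ s
    rw [hFp] at h0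
    simp only [] at h0
    rw [Fin.sum_univ_succ, ha0, zero_mul, zero_add] at h0
    rw [← h0]
    apply Finset.sum_congr rfl
    intro e _
    simp only [hgdef, Fin.val_succ, if_neg (Nat.succ_ne_zero (e : ℕ))]
  -- conclude
  rw [← ha]
  apply Finset.sum_eq_zero
  intro i _
  rcases Fin.eq_zero_or_eq_succ i with h | ⟨e, rfl⟩
  · rw [h, ha0, zero_smul]
  · rw [hasucc e, zero_smul]
end

section
/- Let α_1, …, α_n be distinct elements of a field F with n ≥ 2, v_1,…,v_n nonzero, and 2 ≤ k ≤ n - ℓ - 1 with 0 ≤ ℓ ≤ n-k-1. Then the k×n matrix G with first row (v_j(1 + ∑_{t=0}^{ℓ} η_t α_j^{k+t}))_j and rows (v_j α_j^i)_j for 1 ≤ i ≤ k-1 has rank k. -/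
open Finset Matrix

theorem stmt17 {F : Type*} [Field F] (n k ℓ : ℕ) (hn : 2 ≤ n)
    (α : Fin n → F) (hinj : Function.Injective α)
    (v : Fin n → F) (hv : ∀ i, v i ≠ 0)
    (hk2 : 2 ≤ k) (hk : k ≤ n - ℓ - 1) (hℓ : ℓ ≤ n - k - 1)
    (η : ℕ → F)
    (G : Matrix (Fin k) (Fin n) F)
    (hG : G = Matrix.of fun (i : Fin k) (j : Fin n) =>
      if (i : ℕ) = 0 then v j * (1 + ∑ t ∈ Finset.range (ℓ + 1), η t * α j ^ (k + t))
      else v j * α j ^ (i : ℕ)) :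
    G.rank = k := by
  have hkn : k + ℓ + 1 ≤ n := by omega
  have h0k : 0 < k := by omega
  have hli : LinearIndependent F (fun i => G i) := by
    rw [Fintype.linearIndependent_iff]
    intro c hc
    classical
    set q : Polynomial F := (∑ i : Fin k, Polynomial.C (c i) * Polynomial.X ^ (i : ℕ)) +
      Polynomial.C (c ⟨0, h0k⟩) *
        ∑ t ∈ Finset.range (ℓ + 1), Polynomial.C (η t) * Polynomial.X ^ (k + t) with hq
    have heval : ∀ j : Fin n, q.eval (α j) = 0 := by
      intro j
      have hj := congrFun hc j
      simp only [Finset.sum_apply, Pi.smul_apply, Pi.zero_apply, smul_eq_mul, hG,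
        Matrix.of_apply] at hj
      have hsplit : ∀ (f : Fin k → F), ∑ i : Fin k, f i
          = f ⟨0, h0k⟩ + ∑ i ∈ Finset.univ.erase ⟨0, h0k⟩, f i :=
        fun f => (Finset.add_sum_erase Finset.univ f (Finset.mem_univ _)).symm
      rw [hsplit] at hj
      have key : q.eval (α j) * v j
          = (c ⟨0, h0k⟩ *
              if ((⟨0, h0k⟩ : Fin k) : ℕ) = 0 then
                v j * (1 + ∑ t ∈ Finset.range (ℓ + 1), η t * α j ^ (k + t))
              else v j * α j ^ ((⟨0, h0k⟩ : Fin k) : ℕ)) +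
            ∑ i ∈ Finset.univ.erase ⟨0, h0k⟩,
              c i * if (i : ℕ) = 0 then
                v j * (1 + ∑ t ∈ Finset.range (ℓ + 1), η t * α j ^ (k + t))
              else v j * α j ^ (i : ℕ) := by
        rw [if_pos rfl]
        have herase : ∑ i ∈ Finset.univ.erase ⟨0, h0k⟩,
            (c i * if (i : ℕ) = 0 then
                v j * (1 + ∑ t ∈ Finset.range (ℓ + 1), η t * α j ^ (k + t))
              else v j * α j ^ (i : ℕ))
            = ∑ i ∈ Finset.univ.erase ⟨0, h0k⟩, c i * (v j * α j ^ (i : ℕ)) := by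
          refine Finset.sum_congr rfl fun i hi => ?_
          have hne : (i : ℕ) ≠ 0 := by
            intro h
            exact (Finset.mem_erase.mp hi).1 (Fin.ext h)
          rw [if_neg hne]
        rw [herase, hq]
        simp only [Polynomial.eval_add, Polynomial.eval_mul, Polynomial.eval_finset_sum,
          Polynomial.eval_C, Polynomial.eval_pow, Polynomial.eval_X]
        rw [hsplit (fun i => c i * α j ^ (i : ℕ))]
        simp only [pow_zero, mul_one]
        rw [add_mul, add_mul, Finset.sum_mul,
          show ∑ i ∈ Finset.univ.erase ⟨0, h0k⟩, c i * α j ^ (i : ℕ) * v j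
            = ∑ i ∈ Finset.univ.erase ⟨0, h0k⟩, c i * (v j * α j ^ (i : ℕ)) from
            Finset.sum_congr rfl fun i _ => by ring]
        ring
      have : q.eval (α j) * v j = 0 := by rw [key, hj]
      rcases mul_eq_zero.mp this with h | h
      · exact h
      · exact absurd h (hv j)
    have hdeg : q.natDegree < Fintype.card (Fin n) := by
      rw [Fintype.card_fin]
      refine lt_of_le_of_lt (le_trans (Polynomial.natDegree_add_le _ _) ?_)
        (show k + ℓ < n by omega)
      refine max_le ?_ ?_
      · refine Polynomial.natDegree_sum_le_of_forall_le _ _ fun i _ => ?_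
        refine le_trans (Polynomial.natDegree_C_mul_le _ _) ?_
        simp only [Polynomial.natDegree_X_pow]
        omega
      · refine le_trans (Polynomial.natDegree_C_mul_le _ _) ?_
        refine Polynomial.natDegree_sum_le_of_forall_le _ _ fun t ht => ?_
        refine le_trans (Polynomial.natDegree_C_mul_le _ _) ?_
        simp only [Polynomial.natDegree_X_pow]
        have := Finset.mem_range.mp ht
        omega
    have hq0 : q = 0 :=
      Polynomial.eq_zero_of_natDegree_lt_card_of_eval_eq_zero q hinj heval hdeg
    intro i
    have h1 : (∑ i' : Fin k, c i' * if ((i : ℕ) = (i' : ℕ)) then (1 : F) else 0) = c i := by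
      rw [Finset.sum_eq_single i]
      · simp
      · intro b _ hb
        simp [Fin.val_eq_val, hb.symm]
      · simp
    have h2 : (∑ t ∈ Finset.range (ℓ + 1),
        η t * if ((i : ℕ) = k + t) then (1 : F) else 0) = 0 := by
      refine Finset.sum_eq_zero fun t ht => ?_
      have : (i : ℕ) ≠ k + t := by have := i.isLt; omega
      simp [this]
    have hco : q.coeff (i : ℕ) = c i := by
      rw [hq]
      simp only [Polynomial.coeff_add, Polynomial.finset_sum_coeff, Polynomial.coeff_C_mul,
        Polynomial.coeff_X_pow]
      rw [h1, h2, mul_zero, add_zero]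
    rw [hq0] at hco
    simpa using hco.symm
  have := hli.rank_matrix
  simpa using this
end
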